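/- arXiv:2010.14790 — 4 statements merged into one kernel-verified Lean document; each statement's English description precedes it below -/
import Mathlib

section
/- In a regular p-group G, the order of a product of finitely many elements divides the least common multiple of the orders of those elements; in particular exp(G) = ge(G). -/
/-- The generator exponent: minimum over generating sets `S` of `lcm {ord x : x ∈ S}`. -/
noncomputable def genExp (G : Type*) [Group G] : ℕ :=
  sInf {n | ∃ S : Finset G, Subgroup.closure (S : Set G) = ⊤ ∧ n = S.lcm orderOf}

section RegularAux

open Subgroup

open scoped commutatorElement

universe u

/-- The regularity condition. -/
def RegP (p : ℕ) (G : Type u) [Group G] : Prop :=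
  ∀ a b : G, ∃ c ∈ ⁅Subgroup.closure {a, b}, Subgroup.closure {a, b}⁆,
      a ^ p * b ^ p = (a * b) ^ p * c ^ p

lemma regP_subgroup {p : ℕ} {G : Type u} [Group G] (h : RegP p G) (K : Subgroup G) :
    RegP p K := by
  intro a b
  obtain ⟨c, hc, heq⟩ := h (a : G) (b : G)
  have himg : (Subgroup.closure ({(a : G), (b : G)} : Set G))
      = Subgroup.map K.subtype (Subgroup.closure ({a, b} : Set K)) := by
    rw [MonoidHom.map_closure]
    congr 1
    rw [Set.image_insert_eq, Set.image_singleton]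
    rfl
  rw [himg, ← Subgroup.map_commutator] at hc
  obtain ⟨c', hc', hcc⟩ := hc
  refine ⟨c', hc', ?_⟩
  apply Subtype.coe_injective
  push_cast
  rw [← hcc] at heq
  simpa using heq

lemma closure_commute {G : Type u} [Group G] {s : Set G}
    (hs : ∀ x ∈ s, ∀ y ∈ s, Commute x y) :
    ∀ x ∈ closure s, ∀ y ∈ closure s, Commute x y := by
  intro x hx y hy
  exact closure_induction₂ (fun x y hx hy => hs x hx y hy)
    (fun x _ => Commute.one_left x) (fun x _ => Commute.one_right x)
    (fun x y z _ _ _ h1 h2 => h1.mul_left h2)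
    (fun y z x _ _ _ h1 h2 => h1.mul_right h2)
    (fun x y _ _ h => h.inv_left) (fun x y _ _ h => h.inv_right) hx hy

lemma commutator_le_coatom {G : Type u} [Group G] (hnil : Group.IsNilpotent G)
    {M : Subgroup G} (hM : IsCoatom M) : commutator G ≤ M := by
  haveI hMn : M.Normal :=
    Subgroup.NormalizerCondition.normal_of_coatom M normalizerCondition_of_isNilpotent hM
  set f := QuotientGroup.mk' M with hf
  have habel : ∀ u v : G ⧸ M, Commute u v := by
    by_cases hQ : ∀ x : G ⧸ M, x = 1
    · intro u v; rw [hQ u, hQ v]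
    · push_neg at hQ
      obtain ⟨x, hx⟩ := hQ
      have hK : Subgroup.comap f (Subgroup.zpowers x) = ⊤ := by
        apply hM.2
        refine lt_of_le_of_ne ?_ ?_
        · intro g hg
          have hg1 : f g = 1 := (QuotientGroup.eq_one_iff g).mpr hg
          simp only [Subgroup.mem_comap, hg1]
          exact one_mem _
        · intro hEq
          obtain ⟨g₀, hg₀⟩ := QuotientGroup.mk'_surjective M x
          have hg₀K : g₀ ∈ Subgroup.comap f (Subgroup.zpowers x) := by
            simp only [Subgroup.mem_comap, hg₀]
            rw [show f g₀ = x from hg₀]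
            exact Subgroup.mem_zpowers x
          rw [← hEq] at hg₀K
          exact hx (by rw [← hg₀]; exact (QuotientGroup.eq_one_iff g₀).mpr hg₀K)
      have hzp : ∀ v : G ⧸ M, v ∈ Subgroup.zpowers x := by
        intro v
        obtain ⟨g, rfl⟩ := QuotientGroup.mk'_surjective M v
        have : g ∈ Subgroup.comap f (Subgroup.zpowers x) := by rw [hK]; trivial
        exact this
      intro u v
      obtain ⟨m, hm⟩ := Subgroup.mem_zpowers_iff.mp (hzp u)
      obtain ⟨k, hk⟩ := Subgroup.mem_zpowers_iff.mp (hzp v)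
      rw [← hm, ← hk]
      exact Commute.zpow_zpow (Commute.refl x) m k
  rw [_root_.commutator_def, Subgroup.commutator_le]
  intro g _ k _
  have h1 : f ⁅g, k⁆ = 1 := by
    rw [map_commutatorElement, commutatorElement_eq_one_iff_commute]
    exact habel _ _
  exact (QuotientGroup.eq_one_iff _).mp h1

lemma commutator_le_frattini' {G : Type u} [Group G] (hnil : Group.IsNilpotent G) :
    commutator G ≤ frattini G := by
  unfold frattini Order.radical
  exact le_iInf₂ fun M hM => commutator_le_coatom hnil hM

lemma commutator_le_normalClosure' {G : Type u} [Group G] (a b : G)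
    (h : Subgroup.closure ({a, b} : Set G) = ⊤) :
    commutator G ≤ Subgroup.normalClosure {⁅a, b⁆} := by
  set N := Subgroup.normalClosure ({⁅a, b⁆} : Set G) with hN
  set f := QuotientGroup.mk' N with hf
  have hfa : ∀ x : G, f x ∈ Subgroup.closure ({f a, f b} : Set (G ⧸ N)) := by
    intro x
    have hx : f x ∈ Subgroup.map f (Subgroup.closure ({a, b} : Set G)) :=
      ⟨x, by rw [h]; trivial, rfl⟩
    rwa [MonoidHom.map_closure, Set.image_insert_eq, Set.image_singleton] at hx
  have hcab : Commute (f a) (f b) := by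
    rw [← commutatorElement_eq_one_iff_commute, ← map_commutatorElement]
    exact (QuotientGroup.eq_one_iff _).mpr (Subgroup.subset_normalClosure rfl)
  have hpair : ∀ x ∈ ({f a, f b} : Set (G ⧸ N)), ∀ y ∈ ({f a, f b} : Set (G ⧸ N)),
      Commute x y := by
    intro x hx y hy
    simp only [Set.mem_insert_iff, Set.mem_singleton_iff] at hx hy
    rcases hx with rfl | rfl <;> rcases hy with rfl | rfl
    · exact Commute.refl _
    · exact hcab
    · exact hcab.symm
    · exact Commute.refl _
  rw [_root_.commutator_def, Subgroup.commutator_le]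
  intro g _ k _
  have h1 : f ⁅g, k⁆ = 1 := by
    rw [map_commutatorElement, commutatorElement_eq_one_iff_commute]
    exact closure_commute hpair _ (hfa g) _ (hfa k)
  exact (QuotientGroup.eq_one_iff _).mp h1

/-- P. Hall's theorem on regular p-groups: products of `p^n`-torsion elements are
`p^n`-torsion, by strong induction on the order of the group. -/
lemma regular_key (p : ℕ) (hp : p.Prime) :
    ∀ (N : ℕ) (G : Type u) [Group G] [Finite G],
      Nat.card G ≤ N → IsPGroup p G → RegP p G →
      ∀ (n : ℕ) (a b : G), a ^ p ^ n = 1 → b ^ p ^ n = 1 → (a * b) ^ p ^ n = 1 := by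
  intro N
  induction N with
  | zero =>
    intro G _ _ hcard _ _
    have := Nat.card_pos (α := G)
    omega
  | succ N IH =>
    intro G _ _ hcard hG hreg
    haveI : Fact p.Prime := ⟨hp⟩
    haveI hnil : Group.IsNilpotent G := hG.isNilpotent
    have sub_apply : ∀ (K : Subgroup G), K ≠ ⊤ → ∀ (m : ℕ) (x y : G),
        x ∈ K → y ∈ K → x ^ p ^ m = 1 → y ^ p ^ m = 1 → (x * y) ^ p ^ m = 1 := by
      intro K hK m x y hx hy hx1 hy1
      have hlt : Nat.card K < Nat.card G := by
        rcases lt_or_ge (Nat.card K) (Nat.card G) with h | h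
        · exact h
        · exact absurd (Subgroup.eq_top_of_le_card K h) hK
      have hres := IH K (by omega) (hG.to_subgroup K) (regP_subgroup hreg K) m
        ⟨x, hx⟩ ⟨y, hy⟩ (by apply Subtype.ext; simpa using hx1)
        (by apply Subtype.ext; simpa using hy1)
      have := congrArg (fun z : K => (z : G)) hres
      simpa using this
    intro n
    induction n with
    | zero =>
      intro a b ha hb
      simp only [pow_zero, pow_one] at ha hb ⊢
      rw [ha, hb, one_mul]
    | succ n ihn =>
      intro a b ha hb
      by_cases hH : Subgroup.closure ({a, b} : Set G) = ⊤
      · obtain ⟨c, hc, heq⟩ := hreg a b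
        rw [hH] at hc
        have hcD : c ∈ commutator G := by rw [_root_.commutator_def]; exact hc
        set J := Subgroup.zpowers a ⊔ commutator G with hJdef
        have hJa : ∀ g : G, g * a * g⁻¹ ∈ J := by
          intro g
          have h1 : g * a * g⁻¹ = ⁅g, a⁆ * a := by group
          rw [h1]
          exact mul_mem
            ((le_sup_right : commutator G ≤ J)
              (Subgroup.commutator_mem_commutator (Subgroup.mem_top g) (Subgroup.mem_top a)))
            ((le_sup_left : Subgroup.zpowers a ≤ J) (Subgroup.mem_zpowers a))
        haveI hJn : J.Normal := by
          constructor
          intro x hx g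
          have hx' : x ∈ ((Subgroup.zpowers a ⊔ commutator G : Subgroup G) : Set G) := hx
          rw [Subgroup.mul_normal] at hx'
          obtain ⟨y, hy, z, hz, rfl⟩ := Set.mem_mul.mp hx'
          obtain ⟨m, rfl⟩ := Subgroup.mem_zpowers_iff.mp hy
          have e : g * (a ^ m * z) * g⁻¹ = (g * a * g⁻¹) ^ m * (g * z * g⁻¹) := by
            rw [conj_zpow]; group
          rw [e]
          exact mul_mem (Subgroup.zpow_mem J (hJa g) m)
            ((le_sup_right : commutator G ≤ J)
              (Subgroup.Normal.conj_mem inferInstance z hz g))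
        by_cases hJtop : J = ⊤
        · -- G is cyclic, hence abelian
          have hza : Subgroup.zpowers a = ⊤ := by
            apply frattini_nongenerating
            rw [eq_top_iff, ← hJtop]
            exact sup_le_sup_left (commutator_le_frattini' hnil) _
          have hcomm : Commute a b := by
            have hb' : b ∈ Subgroup.zpowers a := by rw [hza]; trivial
            obtain ⟨m, hm⟩ := Subgroup.mem_zpowers_iff.mp hb'
            rw [← hm]
            exact Commute.zpow_right (Commute.refl a) m
          rw [hcomm.mul_pow, ha, hb, one_mul]
        · have hDle : commutator G ≤ J := le_sup_right
          have hDne : commutator G ≠ ⊤ := by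
            intro h
            exact hJtop (top_le_iff.mp (h ▸ hDle))
          have hAle : Subgroup.normalClosure {a} ≤ J :=
            Subgroup.normalClosure_le_normal
              (Set.singleton_subset_iff.mpr
                ((le_sup_left : Subgroup.zpowers a ≤ J) (Subgroup.mem_zpowers a)))
          have hAne : Subgroup.normalClosure ({a} : Set G) ≠ ⊤ := by
            intro h
            exact hJtop (top_le_iff.mp (h ▸ hAle))
          -- ⁅a,b⁆ is p^(n+1)-torsion
          have hxmem : a⁻¹ ∈ Subgroup.normalClosure ({a} : Set G) :=
            inv_mem (Subgroup.subset_normalClosure (s := ({a} : Set G)) rfl)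
          have hymem : b⁻¹ * a * b ∈ Subgroup.normalClosure ({a} : Set G) := by
            have h0 : b⁻¹ * a * b = b⁻¹ * a * (b⁻¹)⁻¹ := by group
            rw [h0]
            exact Subgroup.Normal.conj_mem inferInstance a
              (Subgroup.subset_normalClosure (s := ({a} : Set G)) rfl) b⁻¹
          have hxpow : (a⁻¹ : G) ^ p ^ (n + 1) = 1 := by rw [inv_pow, ha, inv_one]
          have hypow : (b⁻¹ * a * b) ^ p ^ (n + 1) = 1 := by
            have h0 : b⁻¹ * a * b = b⁻¹ * a * (b⁻¹)⁻¹ := by group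
            rw [h0, conj_pow, ha, mul_one, inv_inv, inv_mul_cancel]
          have hx1 : (a⁻¹ * (b⁻¹ * a * b)) ^ p ^ (n + 1) = 1 :=
            sub_apply _ hAne (n + 1) _ _ hxmem hymem hxpow hypow
          have habt : ⁅a, b⁆ ^ p ^ (n + 1) = 1 := by
            have e : ⁅a, b⁆ = (a * b) * (a⁻¹ * (b⁻¹ * a * b)) * (a * b)⁻¹ := by group
            rw [e, conj_pow, hx1, mul_one, mul_inv_cancel]
          -- the p^(n+1)-torsion elements of the commutator subgroup form a normal subgroup
          let T : Subgroup G :=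
            { carrier := {g | g ∈ commutator G ∧ g ^ p ^ (n + 1) = 1}
              one_mem' := ⟨one_mem _, one_pow _⟩
              mul_mem' := by
                rintro x y ⟨hxD, hxp⟩ ⟨hyD, hyp⟩
                exact ⟨mul_mem hxD hyD, sub_apply (commutator G) hDne (n + 1) x y hxD hyD hxp hyp⟩
              inv_mem' := by
                rintro x ⟨hxD, hxp⟩
                exact ⟨inv_mem hxD, by rw [inv_pow, hxp, inv_one]⟩ }
          haveI hTn : T.Normal := by
            constructor
            rintro x ⟨hxD, hxp⟩ g
            refine ⟨Subgroup.Normal.conj_mem inferInstance x hxD g, ?_⟩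
            rw [conj_pow, hxp, mul_one, mul_inv_cancel]
          have hDT : commutator G ≤ T := by
            refine (commutator_le_normalClosure' a b hH).trans
              (Subgroup.normalClosure_le_normal ?_)
            intro x hx
            rw [Set.mem_singleton_iff] at hx
            subst hx
            exact ⟨Subgroup.commutator_mem_commutator (Subgroup.mem_top a)
              (Subgroup.mem_top b), habt⟩
          have hcp : c ^ p ^ (n + 1) = 1 := (hDT hcD).2
          have hstep : ∀ x : G, x ^ p ^ (n + 1) = (x ^ p) ^ p ^ n := by
            intro x
            rw [pow_succ', pow_mul]
          have h1 : (a ^ p * b ^ p) ^ p ^ n = 1 :=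
            ihn _ _ (by rw [← hstep, ha]) (by rw [← hstep, hb])
          have h2 : ((c ^ p)⁻¹) ^ p ^ n = 1 := by
            rw [inv_pow, ← hstep, hcp, inv_one]
          have h3 : (a * b) ^ p = (a ^ p * b ^ p) * (c ^ p)⁻¹ := by
            rw [heq]; group
          rw [hstep (a * b), h3]
          exact ihn _ _ h1 h2
      · exact sub_apply _ hH (n + 1) a b
          (Subgroup.subset_closure (Set.mem_insert a {b}))
          (Subgroup.subset_closure (by simp)) ha hb

end RegularAux

/-- In a regular `p`-group, the order of a product of finitely many elements divides the lcm
of the orders of those elements; in particular `exp(G) = ge(G)`. -/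
theorem regular_pGroup_orderOf_prod (p : ℕ) (hp : p.Prime) (G : Type*) [Group G] [Finite G]
    (hG : IsPGroup p G)
    (hreg : ∀ a b : G, ∃ c ∈ ⁅Subgroup.closure {a, b}, Subgroup.closure {a, b}⁆,
      a ^ p * b ^ p = (a * b) ^ p * c ^ p) :
    (∀ l : List G, orderOf l.prod ∣ (l.map orderOf).foldr Nat.lcm 1) ∧
      Monoid.exponent G = genExp G := by
  haveI : Fact p.Prime := ⟨hp⟩
  have key := regular_key p hp (Nat.card G) G le_rfl hG hreg
  have hdvd2 : ∀ a b : G, orderOf (a * b) ∣ Nat.lcm (orderOf a) (orderOf b) := by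
    intro a b
    obtain ⟨i, hi⟩ := (IsPGroup.iff_orderOf.mp hG) a
    obtain ⟨j, hj⟩ := (IsPGroup.iff_orderOf.mp hG) b
    have ha : a ^ p ^ max i j = 1 :=
      orderOf_dvd_iff_pow_eq_one.mp (hi ▸ pow_dvd_pow p (le_max_left i j))
    have hb : b ^ p ^ max i j = 1 :=
      orderOf_dvd_iff_pow_eq_one.mp (hj ▸ pow_dvd_pow p (le_max_right i j))
    have hab : orderOf (a * b) ∣ p ^ max i j :=
      orderOf_dvd_iff_pow_eq_one.mpr (key (max i j) a b ha hb)
    refine hab.trans ?_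
    rcases le_total i j with h | h
    · rw [max_eq_right h, ← hj]; exact Nat.dvd_lcm_right _ _
    · rw [max_eq_left h, ← hi]; exact Nat.dvd_lcm_left _ _
  have hlist : ∀ l : List G, orderOf l.prod ∣ (l.map orderOf).foldr Nat.lcm 1 := by
    intro l
    induction l with
    | nil => simp
    | cons a l ih =>
      simp only [List.prod_cons, List.map_cons, List.foldr_cons]
      exact (hdvd2 a l.prod).trans
        (Nat.lcm_dvd (Nat.dvd_lcm_left _ _) (ih.trans (Nat.dvd_lcm_right _ _)))
  refine ⟨hlist, ?_⟩
  haveI : Fintype G := Fintype.ofFinite G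
  have hmem : Monoid.exponent G ∈
      {n | ∃ S : Finset G, Subgroup.closure (S : Set G) = ⊤ ∧ n = S.lcm orderOf} :=
    ⟨Finset.univ, by rw [Finset.coe_univ, Subgroup.closure_univ],
      (Monoid.lcm_orderOf_eq_exponent (G := G)).symm⟩
  have hlb : ∀ m ∈ {n | ∃ S : Finset G, Subgroup.closure (S : Set G) = ⊤ ∧ n = S.lcm orderOf},
      Monoid.exponent G ∣ m ∧ 0 < m := by
    rintro m ⟨S, hS, rfl⟩
    constructor
    · apply Monoid.exponent_dvd_of_forall_pow_eq_one
      intro g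
      rw [← orderOf_dvd_iff_pow_eq_one]
      have hg : g ∈ Subgroup.closure (S : Set G) := hS ▸ Subgroup.mem_top g
      refine Subgroup.closure_induction (p := fun x _ => orderOf x ∣ S.lcm orderOf)
        ?_ ?_ ?_ ?_ hg
      · intro x hx; exact Finset.dvd_lcm hx
      · simp
      · intro x y _ _ hx hy; exact (hdvd2 x y).trans (Nat.lcm_dvd hx hy)
      · intro x _ hx; rwa [orderOf_inv]
    · rw [Nat.pos_iff_ne_zero]
      intro h0
      rw [Finset.lcm_eq_zero_iff] at h0
      obtain ⟨x, _, hx⟩ := h0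
      exact (orderOf_pos x).ne' hx
  refine le_antisymm (le_csInf ⟨_, hmem⟩ fun m hm => Nat.le_of_dvd (hlb m hm).2 (hlb m hm).1)
    (Nat.sInf_le hmem)
end

section
/- Every finite p-group of nilpotency class strictly less than p is regular. -/
namespace RegAux

open Finset
open scoped commutatorElement

/-- Forward difference of an integer-valued function. -/
def fdiff (F : ℕ → ℤ) : ℕ → ℤ := fun n => F (n + 1) - F n

/-- `F` agrees with an integer polynomial of degree at most `d` (via finite differences). -/
def IsPolyDeg (d : ℕ) (F : ℕ → ℤ) : Prop := fdiff^[d + 1] F = 0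

lemma fdiff_zero_fn : fdiff (0 : ℕ → ℤ) = 0 := by
  funext n; simp [fdiff]

lemma fdiff_iterate_zero (k : ℕ) : fdiff^[k] (0 : ℕ → ℤ) = 0 := by
  induction k with
  | zero => rfl
  | succ k ih => rw [Function.iterate_succ_apply, fdiff_zero_fn, ih]

lemma IsPolyDeg.mono {d e : ℕ} {F : ℕ → ℤ} (h : IsPolyDeg d F) (hde : d ≤ e) :
    IsPolyDeg e F := by
  unfold IsPolyDeg at *
  obtain ⟨k, rfl⟩ := Nat.exists_eq_add_of_le hde
  rw [show d + k + 1 = k + (d + 1) by omega, Function.iterate_add_apply, h,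
    fdiff_iterate_zero]

lemma isPolyDeg_const (c : ℤ) (d : ℕ) : IsPolyDeg d (fun _ => c) := by
  have : IsPolyDeg 0 (fun _ => c) := by
    unfold IsPolyDeg
    funext n; simp [fdiff]
  exact this.mono (Nat.zero_le d)

lemma isPolyDeg_zero_fn (d : ℕ) : IsPolyDeg d (0 : ℕ → ℤ) := isPolyDeg_const 0 d

lemma fdiff_add (F G : ℕ → ℤ) : fdiff (fun n => F n + G n) = fun n => fdiff F n + fdiff G n := by
  funext n; simp [fdiff]; ring

lemma fdiff_neg (F : ℕ → ℤ) : fdiff (fun n => - F n) = fun n => - fdiff F n := by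
  funext n; simp [fdiff]; ring

lemma IsPolyDeg.add {d : ℕ} {F G : ℕ → ℤ} (hF : IsPolyDeg d F) (hG : IsPolyDeg d G) :
    IsPolyDeg d (fun n => F n + G n) := by
  unfold IsPolyDeg at *
  have key : ∀ k (A B : ℕ → ℤ), fdiff^[k] (fun n => A n + B n)
      = fun n => fdiff^[k] A n + fdiff^[k] B n := by
    intro k
    induction k with
    | zero => intro A B; rfl
    | succ k ih =>
      intro A B
      rw [Function.iterate_succ_apply, fdiff_add, ih]
      funext n
      rw [Function.iterate_succ_apply, Function.iterate_succ_apply]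
  rw [key, hF, hG]
  funext n; simp

lemma IsPolyDeg.neg {d : ℕ} {F : ℕ → ℤ} (hF : IsPolyDeg d F) :
    IsPolyDeg d (fun n => - F n) := by
  unfold IsPolyDeg at *
  have key : ∀ k (A : ℕ → ℤ), fdiff^[k] (fun n => - A n) = fun n => - fdiff^[k] A n := by
    intro k
    induction k with
    | zero => intro A; rfl
    | succ k ih =>
      intro A
      rw [Function.iterate_succ_apply, fdiff_neg, ih]
      funext n
      rw [Function.iterate_succ_apply]
  rw [key, hF]
  funext n; simp

lemma IsPolyDeg.fdiff' {d : ℕ} {F : ℕ → ℤ} (hF : IsPolyDeg (d + 1) F) :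
    IsPolyDeg d (fdiff F) := by
  unfold IsPolyDeg at *
  rw [← Function.iterate_succ_apply, hF]

lemma IsPolyDeg.fdiff_eq_zero {F : ℕ → ℤ} (hF : IsPolyDeg 0 F) : fdiff F = 0 := hF

/-- Partial sums raise the degree by one. -/
lemma IsPolyDeg.sum {d : ℕ} {F : ℕ → ℤ} (hF : IsPolyDeg d F) :
    IsPolyDeg (d + 1) (fun n => ∑ K ∈ range n, F K) := by
  unfold IsPolyDeg at *
  rw [Function.iterate_succ_apply]
  have : fdiff (fun n => ∑ K ∈ range n, F K) = F := by
    funext n; simp [fdiff, Finset.sum_range_succ]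
  rw [this, hF]

lemma isPolyDeg_cast : IsPolyDeg 1 (fun n => (n : ℤ)) := by
  unfold IsPolyDeg
  have h1 : fdiff (fun n => (n : ℤ)) = fun _ => 1 := by funext n; simp [fdiff]
  have h2 : fdiff (fun _ => (1 : ℤ)) = 0 := by funext n; simp [fdiff]
  rw [Function.iterate_succ_apply, h1, Function.iterate_one, h2]

lemma isPolyDeg_cast_succ : IsPolyDeg 1 (fun n => ((n : ℤ) + 1)) := by
  have := isPolyDeg_cast.add (isPolyDeg_const 1 1)
  exact this

/-- hockey stick -/
lemma sum_range_choose_int (m n : ℕ) :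
    ∑ K ∈ range n, ((K.choose m : ℤ)) = ((n.choose (m + 1) : ℤ)) := by
  induction n with
  | zero => simp
  | succ n ih =>
    rw [Finset.sum_range_succ, ih]
    rw [Nat.choose_succ_succ' n m]
    push_cast; ring

/-- Newton expansion of a polynomial function in the binomial basis. -/
lemma IsPolyDeg.newton {d : ℕ} {F : ℕ → ℤ} (hF : IsPolyDeg d F) (n : ℕ) :
    F n = ∑ m ∈ range (d + 1), (fdiff^[m] F 0) * (n.choose m : ℤ) := by
  induction d generalizing F n with
  | zero =>
    have hd : fdiff F = 0 := hF
    have : ∀ k, F k = F 0 := by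
      intro k
      induction k with
      | zero => rfl
      | succ k ih =>
        have := congrFun hd k
        simp [fdiff, sub_eq_zero] at this
        rw [this, ih]
    simp [this n]
  | succ d ih =>
    have hG : IsPolyDeg d (fdiff F) := hF.fdiff'
    have tel : F n = F 0 + ∑ K ∈ range n, fdiff F K := by
      induction n with
      | zero => simp
      | succ n ihn =>
        rw [Finset.sum_range_succ, ← add_assoc, ← ihn]
        simp [fdiff]
    rw [tel]
    have : ∀ K, fdiff F K = ∑ m ∈ range (d + 1), (fdiff^[m] (fdiff F) 0) * (K.choose m : ℤ) :=
      fun K => ih hG K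
    calc F 0 + ∑ K ∈ range n, fdiff F K
        = F 0 + ∑ K ∈ range n, ∑ m ∈ range (d + 1), (fdiff^[m] (fdiff F) 0) * (K.choose m : ℤ) := by
          congr 1; exact Finset.sum_congr rfl fun K _ => this K
      _ = F 0 + ∑ m ∈ range (d + 1), (fdiff^[m] (fdiff F) 0) * ∑ K ∈ range n, (K.choose m : ℤ) := by
          rw [Finset.sum_comm]
          congr 1; exact Finset.sum_congr rfl fun m _ => by rw [Finset.mul_sum]
      _ = F 0 + ∑ m ∈ range (d + 1), (fdiff^[m] (fdiff F) 0) * ((n.choose (m + 1) : ℤ)) := by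
          congr 1; exact Finset.sum_congr rfl fun m _ => by rw [sum_range_choose_int]
      _ = ∑ m ∈ range (d + 1 + 1), (fdiff^[m] F 0) * (n.choose m : ℤ) := by
          rw [Finset.sum_range_succ' (fun m => (fdiff^[m] F 0) * (n.choose m : ℤ)) (d + 1),
            add_comm]
          simp only [Nat.choose_zero_right, Nat.cast_one, mul_one, Function.iterate_zero_apply,
            Function.iterate_succ_apply]

/-- The key divisibility: a polynomial function of degree `< p` vanishing at `0`
is divisible by `p` at `p`. -/
lemma IsPolyDeg.prime_dvd_eval {d p : ℕ} {F : ℕ → ℤ} (hp : p.Prime) (hF : IsPolyDeg d F)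
    (h0 : F 0 = 0) (hdp : d < p) : (p : ℤ) ∣ F p := by
  rw [hF.newton p]
  apply Finset.dvd_sum
  intro m hm
  simp only [Finset.mem_range] at hm
  rcases Nat.eq_zero_or_pos m with hm0 | hm1
  · subst hm0
    simp [h0]
  · apply Dvd.dvd.mul_left
    exact_mod_cast Int.natCast_dvd_natCast.mpr
      (Nat.Prime.dvd_choose_self hp hm1.ne' (lt_of_le_of_lt (Nat.lt_succ_iff.mp hm) hdp))


open Subgroup

/-- The lower central series of the whole group. -/
abbrev lowerCentralSeries (H : Type*) [Group H] (n : ℕ) : Subgroup H :=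
  Subgroup.lowerCentralSeries ⊤ n

lemma lowerCentralSeries_zero {H : Type*} [Group H] : lowerCentralSeries H 0 = ⊤ := rfl

lemma lowerCentralSeries_antitone {H : Type*} [Group H] : Antitone (lowerCentralSeries H) :=
  Subgroup.lowerCentralSeries_antitone ⊤

lemma lowerCentralSeries_one {H : Type*} [Group H] : lowerCentralSeries H 1 = commutator H :=
  Subgroup.top_lowerCentralSeries_one

instance lowerCentralSeries_normal {H : Type*} [Group H] (n : ℕ) :
    (lowerCentralSeries H n).Normal :=
  Subgroup.lowerCentralSeries_normal ⊤ n

lemma lowerCentralSeries_map_subtype_le {G : Type*} [Group G] (K : Subgroup G) (n : ℕ) :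
    Subgroup.map K.subtype (lowerCentralSeries K n) ≤ lowerCentralSeries G n := by
  rw [lowerCentralSeries, Subgroup.top_subtype_lowerCentralSeries]
  exact Subgroup.lowerCentralSeries_mono n le_top

lemma lowerCentralSeries_nilpotencyClass {G : Type*} [Group G] [Group.IsNilpotent G] :
    lowerCentralSeries G (Group.nilpotencyClass G) = ⊥ :=
  Subgroup.lowerCentralSeries_nilpotencyClass

variable {H : Type*} [Group H]

/-- General three subgroups lemma. -/
theorem three_subgroups {H₁ H₂ H₃ K : Subgroup H} [K.Normal]
    (h1 : ⁅⁅H₂, H₃⁆, H₁⁆ ≤ K) (h2 : ⁅⁅H₃, H₁⁆, H₂⁆ ≤ K) : ⁅⁅H₁, H₂⁆, H₃⁆ ≤ K := by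
  let f := QuotientGroup.mk' K
  have hker : f.ker = K := QuotientGroup.ker_mk' K
  have hmapbot : ∀ {A : Subgroup H}, A ≤ K → map f A = ⊥ := by
    intro A hA
    rw [eq_bot_iff]
    intro x hx
    obtain ⟨a, ha, rfl⟩ := hx
    have : a ∈ f.ker := hker.symm ▸ hA ha
    simpa [Subgroup.mem_bot] using this
  have h1' : ⁅⁅map f H₂, map f H₃⁆, map f H₁⁆ = ⊥ := by
    rw [← map_commutator, ← map_commutator]; exact hmapbot h1
  have h2' : ⁅⁅map f H₃, map f H₁⁆, map f H₂⁆ = ⊥ := by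
    rw [← map_commutator, ← map_commutator]; exact hmapbot h2
  have h3 : ⁅⁅map f H₁, map f H₂⁆, map f H₃⁆ = ⊥ :=
    commutator_commutator_eq_bot_of_rotate h1' h2'
  rw [← map_commutator, ← map_commutator] at h3
  intro x hx
  have : f x ∈ map f ⁅⁅H₁, H₂⁆, H₃⁆ := mem_map_of_mem f hx
  rw [h3, Subgroup.mem_bot] at this
  rw [← hker]
  exact this

/-- `⁅γ_{i+1}, γ_{j+1}⁆ ≤ γ_{i+j+2}` in `lowerCentralSeries` numbering. -/
theorem lcs_commutator_le (i j : ℕ) :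
    ⁅lowerCentralSeries H i, lowerCentralSeries H j⁆ ≤ lowerCentralSeries H (i + j + 1) := by
  induction j generalizing i with
  | zero =>
    rw [lowerCentralSeries_zero]
    exact le_of_eq rfl
  | succ j ih =>
    have hsucc : lowerCentralSeries H (j + 1) = ⁅lowerCentralSeries H j, ⊤⁆ := rfl
    rw [hsucc, commutator_comm (lowerCentralSeries H i)]
    apply three_subgroups
    · -- ⁅⁅⊤, γi⁆, γj⁆ ≤ γ (i+j+2)
      rw [commutator_comm (⊤ : Subgroup H)]
      have h1 : ⁅lowerCentralSeries H i, (⊤ : Subgroup H)⁆ = lowerCentralSeries H (i + 1) := rfl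
      rw [h1]
      have := ih (i := i + 1)
      apply this.trans
      apply le_of_eq
      congr 1
      omega
    · -- ⁅⁅γi, γj⁆, ⊤⁆ ≤ γ(i+j+2)
      have h2 : lowerCentralSeries H (i + j + 2) = ⁅lowerCentralSeries H (i + j + 1), ⊤⁆ := rfl
      have step : ⁅⁅lowerCentralSeries H i, lowerCentralSeries H j⁆, (⊤ : Subgroup H)⁆
          ≤ ⁅lowerCentralSeries H (i + j + 1), (⊤ : Subgroup H)⁆ :=
        commutator_mono (ih i) le_rfl
      apply step.trans
      have : ⁅lowerCentralSeries H (i + j + 1), (⊤ : Subgroup H)⁆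
          = lowerCentralSeries H (i + j + 2) := rfl
      rw [this]
      exact lowerCentralSeries_antitone (by omega)

/-- Weight-indexed filtration: `gam w = γ_w` classically, i.e. `lowerCentralSeries (w-1)`. -/
def gam (H : Type*) [Group H] (w : ℕ) : Subgroup H := lowerCentralSeries H (w - 1)

lemma gam_le {i j : ℕ} (h : i ≤ j) : gam H j ≤ gam H i :=
  lowerCentralSeries_antitone (by omega)

lemma gam_comm {x y : H} {i j : ℕ} (hi : 1 ≤ i) (hj : 1 ≤ j)
    (hx : x ∈ gam H i) (hy : y ∈ gam H j) : ⁅x, y⁆ ∈ gam H (i + j) := by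
  have := lcs_commutator_le (H := H) (i - 1) (j - 1)
  have hmem : ⁅x, y⁆ ∈ ⁅lowerCentralSeries H (i - 1), lowerCentralSeries H (j - 1)⁆ :=
    commutator_mem_commutator hx hy
  have h2 := this hmem
  have : i - 1 + (j - 1) + 1 = i + j - 1 := by omega
  rwa [this] at h2


open Subgroup

variable {H : Type*} [Group H]

/-- A factor `(g, w, F)`: base element `g` of weight `w`, exponent function `F`. -/
@[reducible] def Fac (H : Type*) : Type _ := H × ℕ × (ℕ → ℤ)

/-- The function `n ↦ g ^ F n` determined by a factor. -/
def facFn (t : Fac H) : ℕ → H := fun n => t.1 ^ (t.2.2 n)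

/-- Validity of a factor at level `j` with slack `r`. -/
def FacOK (j r : ℕ) (t : Fac H) : Prop :=
  t.1 ∈ gam H t.2.1 ∧ j ≤ t.2.1 ∧ 1 ≤ t.2.1 ∧
    ((r ≤ t.2.1 ∧ IsPolyDeg (t.2.1 - r) t.2.2) ∨ t.2.2 = 0)

def listFn (L : List (Fac H)) : ℕ → H := fun n => (L.map (fun t => facFn t n)).prod

/-- The class of "polynomial" functions at level `j` with slack `r`. -/
def Cl (j r : ℕ) (f : ℕ → H) : Prop :=
  ∃ L : List (Fac H), (∀ t ∈ L, FacOK j r t) ∧ ∀ n, f n = listFn L n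

/-- Same, with all exponent functions vanishing at `0`. -/
def ClV (j r : ℕ) (f : ℕ → H) : Prop :=
  ∃ L : List (Fac H), (∀ t ∈ L, FacOK j r t ∧ t.2.2 0 = 0) ∧ ∀ n, f n = listFn L n

lemma listFn_nil : listFn ([] : List (Fac H)) = fun _ => 1 := rfl

lemma listFn_cons (t : Fac H) (L : List (Fac H)) (n : ℕ) :
    listFn (t :: L) n = facFn t n * listFn L n := by
  simp [listFn]

lemma listFn_append (L₁ L₂ : List (Fac H)) (n : ℕ) :
    listFn (L₁ ++ L₂) n = listFn L₁ n * listFn L₂ n := by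
  simp [listFn]

lemma listFn_concat (L : List (Fac H)) (t : Fac H) (n : ℕ) :
    listFn (L ++ [t]) n = listFn L n * facFn t n := by
  rw [listFn_append]
  simp [listFn]

lemma FacOK.mono {j r j' r' : ℕ} {t : Fac H} (h : FacOK j r t) (hj : j' ≤ j) (hr : r' ≤ r) :
    FacOK j' r' t := by
  obtain ⟨h1, h2, h3, h4⟩ := h
  refine ⟨h1, hj.trans h2, h3, ?_⟩
  rcases h4 with ⟨hr2, hd⟩ | hz
  · exact Or.inl ⟨hr.trans hr2, hd.mono (by omega)⟩
  · exact Or.inr hz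

lemma Cl.mono {j r j' r' : ℕ} {f : ℕ → H} (h : Cl j r f) (hj : j' ≤ j) (hr : r' ≤ r) :
    Cl j' r' f := by
  obtain ⟨L, hL, hf⟩ := h
  exact ⟨L, fun t ht => (hL t ht).mono hj hr, hf⟩

lemma ClV.mono {j r j' r' : ℕ} {f : ℕ → H} (h : ClV j r f) (hj : j' ≤ j) (hr : r' ≤ r) :
    ClV j' r' f := by
  obtain ⟨L, hL, hf⟩ := h
  exact ⟨L, fun t ht => ⟨((hL t ht).1).mono hj hr, (hL t ht).2⟩, hf⟩

lemma ClV.toCl {j r : ℕ} {f : ℕ → H} (h : ClV j r f) : Cl j r f := by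
  obtain ⟨L, hL, hf⟩ := h
  exact ⟨L, fun t ht => (hL t ht).1, hf⟩

lemma Cl.one (j r : ℕ) : Cl j r (fun _ => (1 : H)) :=
  ⟨[], by simp, fun n => rfl⟩

lemma ClV.one (j r : ℕ) : ClV j r (fun _ => (1 : H)) :=
  ⟨[], by simp, fun n => rfl⟩

lemma Cl.of_eq {j r : ℕ} {f g : ℕ → H} (h : Cl j r f) (hfg : ∀ n, g n = f n) : Cl j r g := by
  obtain ⟨L, hL, hf⟩ := h
  exact ⟨L, hL, fun n => (hfg n).trans (hf n)⟩

lemma ClV.of_eq {j r : ℕ} {f g : ℕ → H} (h : ClV j r f) (hfg : ∀ n, g n = f n) : ClV j r g := by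
  obtain ⟨L, hL, hf⟩ := h
  exact ⟨L, hL, fun n => (hfg n).trans (hf n)⟩

lemma Cl.mul {j r : ℕ} {f g : ℕ → H} (hf : Cl j r f) (hg : Cl j r g) :
    Cl j r (fun n => f n * g n) := by
  obtain ⟨L₁, hL₁, hf⟩ := hf
  obtain ⟨L₂, hL₂, hg⟩ := hg
  refine ⟨L₁ ++ L₂, ?_, ?_⟩
  · intro t ht
    rcases List.mem_append.mp ht with h | h
    exacts [hL₁ t h, hL₂ t h]
  · intro n
    rw [listFn_append, ← hf, ← hg]

lemma ClV.mul {j r : ℕ} {f g : ℕ → H} (hf : ClV j r f) (hg : ClV j r g) :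
    ClV j r (fun n => f n * g n) := by
  obtain ⟨L₁, hL₁, hf⟩ := hf
  obtain ⟨L₂, hL₂, hg⟩ := hg
  refine ⟨L₁ ++ L₂, ?_, ?_⟩
  · intro t ht
    rcases List.mem_append.mp ht with h | h
    exacts [hL₁ t h, hL₂ t h]
  · intro n
    rw [listFn_append, ← hf, ← hg]

lemma FacOK.neg {j r : ℕ} {t : Fac H} (h : FacOK j r t) :
    FacOK j r (t.1, t.2.1, fun n => - t.2.2 n) := by
  obtain ⟨h1, h2, h3, h4⟩ := h
  refine ⟨h1, h2, h3, ?_⟩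
  rcases h4 with ⟨hr2, hd⟩ | hz
  · exact Or.inl ⟨hr2, hd.neg⟩
  · refine Or.inr ?_
    funext n
    simp [congrFun hz n]

lemma Cl.inv {j r : ℕ} {f : ℕ → H} (hf : Cl j r f) : Cl j r (fun n => (f n)⁻¹) := by
  obtain ⟨L, hL, hf⟩ := hf
  refine ⟨(L.map (fun t => ((t.1 : H), t.2.1, fun n => - t.2.2 n))).reverse, ?_, ?_⟩
  · intro t ht
    rw [List.mem_reverse, List.mem_map] at ht
    obtain ⟨s, hs, rfl⟩ := ht
    exact (hL s hs).neg
  · intro n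
    show (f n)⁻¹ = _
    rw [hf]
    clear hf
    induction L with
    | nil => simp [listFn]
    | cons t L ih =>
      rw [listFn_cons, mul_inv_rev, ih (fun s hs => hL s (List.mem_cons_of_mem t hs))]
      simp only [List.map_cons, List.reverse_cons]
      rw [listFn_concat]
      congr 1
      simp [facFn, zpow_neg]

lemma Cl.mem_gam {j r : ℕ} {f : ℕ → H} (hf : Cl j r f) (n : ℕ) : f n ∈ gam H j := by
  obtain ⟨L, hL, hf⟩ := hf
  rw [hf]
  clear hf
  induction L with
  | nil => exact (gam H j).one_mem
  | cons t L ih =>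
    rw [listFn_cons]
    refine (gam H j).mul_mem ?_ (ih (fun s hs => hL s (List.mem_cons_of_mem t hs)))
    have h1 := (hL t (List.mem_cons_self)).1
    have h2 := (hL t (List.mem_cons_self)).2.1
    exact gam_le h2 ((gam H t.2.1).zpow_mem h1 _)

lemma Cl.single {j r : ℕ} {t : Fac H} (h : FacOK j r t) : Cl j r (facFn t) :=
  ⟨[t], by simpa using h, fun n => by simp [listFn]⟩

lemma ClV.single {j r : ℕ} {t : Fac H} (h : FacOK j r t) (h0 : t.2.2 0 = 0) : ClV j r (facFn t) :=
  ⟨[t], by simpa using ⟨h, h0⟩, fun n => by simp [listFn]⟩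

lemma Cl.const {j r : ℕ} {x : H} (hx : x ∈ gam H j) (hj : 1 ≤ j) (hr : r ≤ j) :
    Cl j r (fun _ => x) := by
  have : Cl j r (facFn ((x, j, fun _ => (1 : ℤ)) : Fac H)) :=
    Cl.single ⟨hx, le_refl _, hj, Or.inl ⟨hr, isPolyDeg_const 1 _⟩⟩
  exact this.of_eq (fun n => by simp [facFn])

/-! ## Group identities -/

section Identities
variable {H : Type*} [Group H]

lemma conj_eq_comm (x z : H) : x * z * x⁻¹ = ⁅x, z⁆ * z := by group

lemma comm_mul_right (x z w : H) : ⁅x, z * w⁆ = ⁅x, z⁆ * (z * ⁅x, w⁆ * z⁻¹) := by group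

lemma comm_mul_left (x y z : H) : ⁅x * y, z⁆ = (x * ⁅y, z⁆ * x⁻¹) * ⁅x, z⁆ := by group

lemma key_identity (A dA B dB : H) :
    ⁅A * dA, B * dB⁆ =
      (A * (⁅dA, B⁆ * (B * ⁅dA, dB⁆ * B⁻¹)) * A⁻¹) * ⁅A, B⁆ * (B * ⁅A, dB⁆ * B⁻¹) := by group

lemma comm_inv_eq (x y : H) : (⁅x, y⁆)⁻¹ = y * x * y⁻¹ * x⁻¹ := by group

end Identities

/-! ## The engine -/

/-- Commutator closure statement at level `s`. -/
def EngP1 (H : Type*) [Group H] (s : ℕ) : Prop :=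
  ∀ (i j r₁ r₂ : ℕ) (f h : ℕ → H), 1 ≤ i → 1 ≤ j → s ≤ i + j →
    Cl i r₁ f → Cl j r₂ h → Cl (i + j) (r₁ + r₂) (fun n => ⁅f n, h n⁆)

/-- Collection statement at level `s`. -/
def EngPC (H : Type*) [Group H] (s : ℕ) : Prop :=
  ∀ (j r : ℕ) (f u : ℕ → H), 1 ≤ j → s ≤ j → f 0 = 1 →
    Cl j (r + 1) u → (∀ n, f (n + 1) = f n * u n) → ClV j r f

section Engine
variable {H : Type*} [Group H] {c : ℕ}

lemma gam_eq_bot (hH : lowerCentralSeries H c = ⊥) {s : ℕ} (hs : c + 1 ≤ s) :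
    gam H s = ⊥ := by
  apply le_bot_iff.mp
  rw [← hH]
  exact lowerCentralSeries_antitone (by omega)

lemma degenerateP1 (hH : lowerCentralSeries H c = ⊥) {s : ℕ} (hs : c + 1 ≤ s) : EngP1 H s := by
  intro i j r₁ r₂ f h hi hj hij hf hh
  have hone : ∀ n, ⁅f n, h n⁆ = 1 := by
    intro n
    have hm := gam_comm hi hj (hf.mem_gam n) (hh.mem_gam n)
    have hb : gam H (i + j) = ⊥ := gam_eq_bot hH (by omega)
    rw [hb] at hm
    simpa using hm
  exact (Cl.one _ _).of_eq hone

lemma degeneratePC (hH : lowerCentralSeries H c = ⊥) {s : ℕ} (hs : c + 1 ≤ s) : EngPC H s := by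
  intro j r f u hj hsj h0 hu hrec
  have hu1 : ∀ n, u n = 1 := by
    intro n
    have hm := hu.mem_gam n
    have hb : gam H j = ⊥ := gam_eq_bot hH (by omega)
    rw [hb] at hm
    simpa using hm
  have hf1 : ∀ n, f n = 1 := by
    intro n
    induction n with
    | zero => exact h0
    | succ n ih => rw [hrec, ih, hu1, one_mul]
  exact (ClV.one _ _).of_eq hf1

lemma zpow_split (x : H) (F : ℕ → ℤ) (n : ℕ) :
    x ^ F (n + 1) = x ^ F n * x ^ fdiff F n := by
  rw [← zpow_add]
  congr 1
  simp [fdiff]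

/-- The collection lemma at level `s`, with the difference split as a factor list
together with a higher-level tail. -/
lemma collect_aux {s : ℕ} (IH1 : EngP1 H (s + 1)) (IHC : EngPC H (s + 1)) :
    ∀ (Lv : List (Fac H)), ∀ (j r : ℕ) (f e : ℕ → H), 1 ≤ j → s ≤ j → f 0 = 1 →
      (∀ t ∈ Lv, FacOK j (r + 1) t) → Cl (j + 1) (r + 1) e →
      (∀ n, f (n + 1) = f n * (listFn Lv n * e n)) → ClV j r f := by
  intro Lv
  induction Lv using List.reverseRecOn with
  | nil =>
    intro j r f e hj hsj h0 _hLv he hrec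
    have hrec' : ∀ n, f (n + 1) = f n * e n := by
      intro n
      rw [hrec n]
      simp [listFn]
    have := IHC (j + 1) r f e (by omega) (by omega) h0 he hrec'
    exact this.mono (by omega) le_rfl
  | append_singleton L A ih =>
    intro j r f e hj hsj h0 hLv he hrec
    have hA : FacOK j (r + 1) A := hLv A (by simp)
    have hL : ∀ t ∈ L, FacOK j (r + 1) t := fun t ht => hLv t (by simp [ht])
    have hrecA : ∀ n, f (n + 1) = f n * (listFn L n * (facFn A n * e n)) := by
      intro n
      rw [hrec n, listFn_concat]
      group
    rcases hA.2.2.2 with hok | hz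
    · -- genuine factor
      obtain ⟨hrw, hdeg⟩ := hok
      have hwj : j ≤ A.2.1 := hA.2.1
      have hw1 : 1 ≤ A.2.1 := hA.2.2.1
      -- the conjugated tail
      have hAfn : Cl j (r + 1) (facFn A) := Cl.single hA
      have hcomm1 : Cl (j + (j + 1)) ((r + 1) + (r + 1)) (fun n => ⁅facFn A n, e n⁆) :=
        IH1 j (j + 1) (r + 1) (r + 1) (facFn A) e (by omega) (by omega) (by omega) hAfn he
      have hetil : Cl (j + 1) (r + 1) (fun n => ⁅facFn A n, e n⁆ * e n) :=
        (hcomm1.mono (by omega) (by omega)).mul he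
      -- the head
      set S : ℕ → ℤ := fun n => ∑ K ∈ Finset.range n, A.2.2 K with hSdef
      have hS : IsPolyDeg (A.2.1 - r) S := by
        have := hdeg.sum
        have heq : A.2.1 - (r + 1) + 1 = A.2.1 - r := by omega
        rwa [heq] at this
      have hαfac : FacOK j r ((A.1, A.2.1, S) : Fac H) :=
        ⟨hA.1, hwj, hw1, Or.inl ⟨show r ≤ A.2.1 by omega, hS⟩⟩
      have hα : Cl j r (fun n => A.1 ^ S n) := Cl.single hαfac
      have hαV : ClV j r (fun n => A.1 ^ S n) := ClV.single hαfac (by simp [hSdef])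
      -- the new difference
      have hLfn : Cl j (r + 1) (listFn L) := ⟨L, hL, fun n => rfl⟩
      have hX : Cl j (r + 1) (fun n => listFn L n * (⁅facFn A n, e n⁆ * e n)) :=
        hLfn.mul (hetil.mono (by omega) le_rfl)
      have hE0 : Cl (j + 1) (r + 1)
          (fun n => ⁅A.1 ^ S n, listFn L n * (⁅facFn A n, e n⁆ * e n)⁆) := by
        have := IH1 j j r (r + 1) _ _ hj hj (by omega) hα hX
        exact this.mono (by omega) (by omega)
      have hvinv : Cl j (r + 1) (fun n => (listFn L n)⁻¹) := hLfn.inv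
      have hE1 : Cl (j + 1) (r + 1)
          (fun n => ⁅(listFn L n)⁻¹,
            ⁅A.1 ^ S n, listFn L n * (⁅facFn A n, e n⁆ * e n)⁆⁆) := by
        have := IH1 j (j + 1) (r + 1) (r + 1) _ _ hj (by omega) (by omega) hvinv hE0
        exact this.mono (by omega) (by omega)
      have he' : Cl (j + 1) (r + 1) (fun n =>
          ⁅(listFn L n)⁻¹, ⁅A.1 ^ S n, listFn L n * (⁅facFn A n, e n⁆ * e n)⁆⁆ *
            (⁅A.1 ^ S n, listFn L n * (⁅facFn A n, e n⁆ * e n)⁆ *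
              (⁅facFn A n, e n⁆ * e n))) :=
        hE1.mul (hE0.mul hetil)
      -- the recurrence for ψ
      have hαsplit : ∀ n, A.1 ^ S (n + 1) = A.1 ^ S n * facFn A n := by
        intro n
        simp only [facFn]
        rw [← zpow_add]
        congr 1
        simp [hSdef, Finset.sum_range_succ]
      have hψ0 : (fun n => f n * (A.1 ^ S n)⁻¹) 0 = 1 := by
        simp [h0, hSdef]
      have hψrec : ∀ n, (fun n => f n * (A.1 ^ S n)⁻¹) (n + 1) =
          (fun n => f n * (A.1 ^ S n)⁻¹) n * (listFn L n * (fun n =>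
            ⁅(listFn L n)⁻¹, ⁅A.1 ^ S n, listFn L n * (⁅facFn A n, e n⁆ * e n)⁆⁆ *
              (⁅A.1 ^ S n, listFn L n * (⁅facFn A n, e n⁆ * e n)⁆ *
                (⁅facFn A n, e n⁆ * e n))) n) := by
        intro n
        simp only
        rw [hrecA n, hαsplit n]
        group
      have hψ : ClV j r (fun n => f n * (A.1 ^ S n)⁻¹) :=
        ih j r _ _ hj hsj hψ0 hL he' hψrec
      have := hψ.mul hαV
      exact this.of_eq (fun n => by simp)
    · -- trivial factor: exponent is zero
      have hfac1 : ∀ n, facFn A n = 1 := by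
        intro n
        have : A.2.2 n = 0 := by rw [hz]; rfl
        simp [facFn, this]
      refine ih j r f e hj hsj h0 hL he ?_
      intro n
      rw [hrecA n, hfac1 n]
      group

/-- The single-single commutator identity used in `ss_body`. -/
lemma ss_identity {H : Type*} [Group H] (A dA B dB : H) :
    ⁅A * dA, B * dB⁆ =
      ⁅A, B⁆ *
        (⁅(⁅A, B⁆)⁻¹, ⁅A, ⁅dA, B⁆ * (⁅B, ⁅dA, dB⁆⁆ * ⁅dA, dB⁆)⁆ *
            (⁅dA, B⁆ * (⁅B, ⁅dA, dB⁆⁆ * ⁅dA, dB⁆))⁆ *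
          ((⁅A, ⁅dA, B⁆ * (⁅B, ⁅dA, dB⁆⁆ * ⁅dA, dB⁆)⁆ *
            (⁅dA, B⁆ * (⁅B, ⁅dA, dB⁆⁆ * ⁅dA, dB⁆))) *
           (⁅B, ⁅A, dB⁆⁆ * ⁅A, dB⁆))) := by group

lemma ss_body {s : ℕ} (IH1 : EngP1 H (s + 1)) (PCs : EngPC H s) (DD : ℕ)
    (ihcall : ∀ (d₁ d₂ : ℕ) (g h₀ : H) (w w' r₁ r₂ : ℕ) (F G : ℕ → ℤ),
      1 ≤ w → 1 ≤ w' → w + w' = s → g ∈ gam H w → h₀ ∈ gam H w' →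
      IsPolyDeg d₁ F → IsPolyDeg d₂ G → d₁ + r₁ ≤ w → d₂ + r₂ ≤ w' → d₁ + d₂ < DD →
      Cl s (r₁ + r₂) (fun n => ⁅g ^ F n, h₀ ^ G n⁆)) :
    ∀ (d₁ d₂ : ℕ) (g h₀ : H) (w w' r₁ r₂ : ℕ) (F G : ℕ → ℤ),
      1 ≤ w → 1 ≤ w' → w + w' = s → g ∈ gam H w → h₀ ∈ gam H w' →
      IsPolyDeg d₁ F → IsPolyDeg d₂ G → d₁ + r₁ ≤ w → d₂ + r₂ ≤ w' → d₁ + d₂ ≤ DD →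
      Cl s (r₁ + r₂) (fun n => ⁅g ^ F n, h₀ ^ G n⁆) := by
  intro d₁ d₂ g h₀ w w' r₁ r₂ F G hw1 hw'1 hsum hg hh hF hG hd1 hd2 hD
  have hs2 : 2 ≤ s := by omega
  have hAfn : Cl w r₁ (fun n => g ^ F n) :=
    Cl.single (t := (g, w, F)) ⟨hg, le_rfl, hw1,
      Or.inl ⟨show r₁ ≤ w by omega, hF.mono (show d₁ ≤ w - r₁ by omega)⟩⟩
  have hBfn : Cl w' r₂ (fun n => h₀ ^ G n) :=
    Cl.single (t := (h₀, w', G)) ⟨hh, le_rfl, hw'1,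
      Or.inl ⟨show r₂ ≤ w' by omega, hG.mono (show d₂ ≤ w' - r₂ by omega)⟩⟩
  -- difference commutator terms
  have hT1 : Cl s (r₁ + r₂ + 1) (fun n => ⁅g ^ fdiff F n, h₀ ^ G n⁆) := by
    rcases d₁ with _ | d₁'
    · have hz : fdiff F = 0 := hF.fdiff_eq_zero
      refine (Cl.one _ _).of_eq ?_
      intro n
      have : fdiff F n = 0 := by rw [hz]; rfl
      simp [this]
    · have := ihcall d₁' d₂ g h₀ w w' (r₁ + 1) r₂ (fdiff F) G hw1 hw'1 hsum hg hh
        hF.fdiff' hG (by omega) (by omega) (by omega)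
      exact this.mono le_rfl (by omega)
  have hT2 : Cl s (r₁ + r₂ + 1) (fun n => ⁅g ^ fdiff F n, h₀ ^ fdiff G n⁆) := by
    rcases d₁ with _ | d₁'
    · have hz : fdiff F = 0 := hF.fdiff_eq_zero
      refine (Cl.one _ _).of_eq ?_
      intro n
      have : fdiff F n = 0 := by rw [hz]; rfl
      simp [this]
    · rcases d₂ with _ | d₂'
      · have hz : fdiff G = 0 := hG.fdiff_eq_zero
        refine (Cl.one _ _).of_eq ?_
        intro n
        have : fdiff G n = 0 := by rw [hz]; rfl
        simp [this]
      · have := ihcall d₁' d₂' g h₀ w w' (r₁ + 1) (r₂ + 1) (fdiff F) (fdiff G) hw1 hw'1 hsum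
          hg hh hF.fdiff' hG.fdiff' (by omega) (by omega) (by omega)
        exact this.mono le_rfl (by omega)
  have hT3 : Cl s (r₁ + r₂ + 1) (fun n => ⁅g ^ F n, h₀ ^ fdiff G n⁆) := by
    rcases d₂ with _ | d₂'
    · have hz : fdiff G = 0 := hG.fdiff_eq_zero
      refine (Cl.one _ _).of_eq ?_
      intro n
      have : fdiff G n = 0 := by rw [hz]; rfl
      simp [this]
    · have := ihcall d₁ d₂' g h₀ w w' r₁ (r₂ + 1) F (fdiff G) hw1 hw'1 hsum hg hh
        hF hG.fdiff' (by omega) (by omega) (by omega)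
      exact this.mono le_rfl (by omega)
  -- Θ := T₁ * (⁅B, T₂⁆ * T₂)
  have hBT2 : Cl s (r₁ + r₂ + 1)
      (fun n => ⁅h₀ ^ G n, ⁅g ^ fdiff F n, h₀ ^ fdiff G n⁆⁆) := by
    have := IH1 w' s r₂ (r₁ + r₂ + 1) _ _ hw'1 (by omega) (by omega) hBfn hT2
    exact this.mono (by omega) (by omega)
  have hΘ : Cl s (r₁ + r₂ + 1) (fun n =>
      ⁅g ^ fdiff F n, h₀ ^ G n⁆ *
        (⁅h₀ ^ G n, ⁅g ^ fdiff F n, h₀ ^ fdiff G n⁆⁆ * ⁅g ^ fdiff F n, h₀ ^ fdiff G n⁆)) :=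
    hT1.mul (hBT2.mul hT2)
  -- Ξ₁ := ⁅A, Θ⁆ * Θ
  have hAΘ : Cl s (r₁ + r₂ + 1) (fun n =>
      ⁅g ^ F n, ⁅g ^ fdiff F n, h₀ ^ G n⁆ *
        (⁅h₀ ^ G n, ⁅g ^ fdiff F n, h₀ ^ fdiff G n⁆⁆ * ⁅g ^ fdiff F n, h₀ ^ fdiff G n⁆)⁆) := by
    have := IH1 w s r₁ (r₁ + r₂ + 1) _ _ hw1 (by omega) (by omega) hAfn hΘ
    exact this.mono (by omega) (by omega)
  have hΞ₁ : Cl s (r₁ + r₂ + 1) (fun n =>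
      ⁅g ^ F n, ⁅g ^ fdiff F n, h₀ ^ G n⁆ *
        (⁅h₀ ^ G n, ⁅g ^ fdiff F n, h₀ ^ fdiff G n⁆⁆ * ⁅g ^ fdiff F n, h₀ ^ fdiff G n⁆)⁆ *
      (⁅g ^ fdiff F n, h₀ ^ G n⁆ *
        (⁅h₀ ^ G n, ⁅g ^ fdiff F n, h₀ ^ fdiff G n⁆⁆ * ⁅g ^ fdiff F n, h₀ ^ fdiff G n⁆))) :=
    hAΘ.mul hΘ
  -- Ξ₂ := ⁅B, T₃⁆ * T₃
  have hBT3 : Cl s (r₁ + r₂ + 1) (fun n => ⁅h₀ ^ G n, ⁅g ^ F n, h₀ ^ fdiff G n⁆⁆) := by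
    have := IH1 w' s r₂ (r₁ + r₂ + 1) _ _ hw'1 (by omega) (by omega) hBfn hT3
    exact this.mono (by omega) (by omega)
  have hΞ₂ : Cl s (r₁ + r₂ + 1) (fun n =>
      ⁅h₀ ^ G n, ⁅g ^ F n, h₀ ^ fdiff G n⁆⁆ * ⁅g ^ F n, h₀ ^ fdiff G n⁆) :=
    hBT3.mul hT3
  -- q := φ⁻¹
  have hq : Cl 1 0 (fun n => (⁅g ^ F n, h₀ ^ G n⁆)⁻¹) := by
    have hA1 : Cl 1 0 (fun n => g ^ F n) := hAfn.mono hw1 (Nat.zero_le _)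
    have hB1 : Cl 1 0 (fun n => h₀ ^ G n) := hBfn.mono hw'1 (Nat.zero_le _)
    have := hB1.mul (hA1.mul (hB1.inv.mul hA1.inv))
    refine this.of_eq ?_
    intro n
    rw [comm_inv_eq]
    group
  -- u := ⁅q, Ξ₁⁆ * (Ξ₁ * Ξ₂)
  have hqΞ₁ : Cl s (r₁ + r₂ + 1) (fun n =>
      ⁅(⁅g ^ F n, h₀ ^ G n⁆)⁻¹,
        ⁅g ^ F n, ⁅g ^ fdiff F n, h₀ ^ G n⁆ *
          (⁅h₀ ^ G n, ⁅g ^ fdiff F n, h₀ ^ fdiff G n⁆⁆ * ⁅g ^ fdiff F n, h₀ ^ fdiff G n⁆)⁆ *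
        (⁅g ^ fdiff F n, h₀ ^ G n⁆ *
          (⁅h₀ ^ G n, ⁅g ^ fdiff F n, h₀ ^ fdiff G n⁆⁆ * ⁅g ^ fdiff F n, h₀ ^ fdiff G n⁆))⁆) := by
    have := IH1 1 s 0 (r₁ + r₂ + 1) _ _ le_rfl (by omega) (by omega) hq hΞ₁
    exact this.mono (by omega) (by omega)
  have hU : Cl s (r₁ + r₂ + 1) (fun n =>
      ⁅(⁅g ^ F n, h₀ ^ G n⁆)⁻¹,
        ⁅g ^ F n, ⁅g ^ fdiff F n, h₀ ^ G n⁆ *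
          (⁅h₀ ^ G n, ⁅g ^ fdiff F n, h₀ ^ fdiff G n⁆⁆ * ⁅g ^ fdiff F n, h₀ ^ fdiff G n⁆)⁆ *
        (⁅g ^ fdiff F n, h₀ ^ G n⁆ *
          (⁅h₀ ^ G n, ⁅g ^ fdiff F n, h₀ ^ fdiff G n⁆⁆ * ⁅g ^ fdiff F n, h₀ ^ fdiff G n⁆))⁆ *
      ((⁅g ^ F n, ⁅g ^ fdiff F n, h₀ ^ G n⁆ *
          (⁅h₀ ^ G n, ⁅g ^ fdiff F n, h₀ ^ fdiff G n⁆⁆ * ⁅g ^ fdiff F n, h₀ ^ fdiff G n⁆)⁆ *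
        (⁅g ^ fdiff F n, h₀ ^ G n⁆ *
          (⁅h₀ ^ G n, ⁅g ^ fdiff F n, h₀ ^ fdiff G n⁆⁆ * ⁅g ^ fdiff F n, h₀ ^ fdiff G n⁆))) *
       (⁅h₀ ^ G n, ⁅g ^ F n, h₀ ^ fdiff G n⁆⁆ * ⁅g ^ F n, h₀ ^ fdiff G n⁆))) :=
    hqΞ₁.mul (hΞ₁.mul hΞ₂)
  -- the recurrence
  have hrec : ∀ n, ⁅g ^ F (n + 1), h₀ ^ G (n + 1)⁆ =
      ⁅g ^ F n, h₀ ^ G n⁆ *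
      (⁅(⁅g ^ F n, h₀ ^ G n⁆)⁻¹,
        ⁅g ^ F n, ⁅g ^ fdiff F n, h₀ ^ G n⁆ *
          (⁅h₀ ^ G n, ⁅g ^ fdiff F n, h₀ ^ fdiff G n⁆⁆ * ⁅g ^ fdiff F n, h₀ ^ fdiff G n⁆)⁆ *
        (⁅g ^ fdiff F n, h₀ ^ G n⁆ *
          (⁅h₀ ^ G n, ⁅g ^ fdiff F n, h₀ ^ fdiff G n⁆⁆ * ⁅g ^ fdiff F n, h₀ ^ fdiff G n⁆))⁆ *
      ((⁅g ^ F n, ⁅g ^ fdiff F n, h₀ ^ G n⁆ *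
          (⁅h₀ ^ G n, ⁅g ^ fdiff F n, h₀ ^ fdiff G n⁆⁆ * ⁅g ^ fdiff F n, h₀ ^ fdiff G n⁆)⁆ *
        (⁅g ^ fdiff F n, h₀ ^ G n⁆ *
          (⁅h₀ ^ G n, ⁅g ^ fdiff F n, h₀ ^ fdiff G n⁆⁆ * ⁅g ^ fdiff F n, h₀ ^ fdiff G n⁆))) *
       (⁅h₀ ^ G n, ⁅g ^ F n, h₀ ^ fdiff G n⁆⁆ * ⁅g ^ F n, h₀ ^ fdiff G n⁆))) := by
    intro n
    rw [zpow_split g F n, zpow_split h₀ G n]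
    exact ss_identity _ _ _ _
  -- assemble via the collection lemma
  have hz₀ : ⁅g ^ F 0, h₀ ^ G 0⁆ ∈ gam H s := by
    have := gam_comm hw1 hw'1 ((gam H w).zpow_mem hg (F 0)) ((gam H w').zpow_mem hh (G 0))
    rwa [hsum] at this
  have hψ0 : (fun n => (⁅g ^ F 0, h₀ ^ G 0⁆)⁻¹ * ⁅g ^ F n, h₀ ^ G n⁆) 0 = 1 := by
    show (⁅g ^ F 0, h₀ ^ G 0⁆)⁻¹ * ⁅g ^ F 0, h₀ ^ G 0⁆ = 1
    group
  have hψ : ClV s (r₁ + r₂)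
      (fun n => (⁅g ^ F 0, h₀ ^ G 0⁆)⁻¹ * ⁅g ^ F n, h₀ ^ G n⁆) := by
    refine PCs s (r₁ + r₂) _ _ (by omega) le_rfl hψ0 hU ?_
    intro n
    rw [hrec n]
    group
  have hconst : Cl s (r₁ + r₂) (fun _ => ⁅g ^ F 0, h₀ ^ G 0⁆) :=
    Cl.const hz₀ (by omega) (by omega)
  refine (hconst.mul hψ.toCl).of_eq ?_
  intro n
  group

/-- The full single-single lemma by induction on the total degree. -/
lemma ss {s : ℕ} (IH1 : EngP1 H (s + 1)) (PCs : EngPC H s) :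
    ∀ (d₁ d₂ : ℕ) (g h₀ : H) (w w' r₁ r₂ : ℕ) (F G : ℕ → ℤ),
      1 ≤ w → 1 ≤ w' → w + w' = s → g ∈ gam H w → h₀ ∈ gam H w' →
      IsPolyDeg d₁ F → IsPolyDeg d₂ G → d₁ + r₁ ≤ w → d₂ + r₂ ≤ w' →
      Cl s (r₁ + r₂) (fun n => ⁅g ^ F n, h₀ ^ G n⁆) := by
  have key : ∀ DD, ∀ (d₁ d₂ : ℕ) (g h₀ : H) (w w' r₁ r₂ : ℕ) (F G : ℕ → ℤ),
      1 ≤ w → 1 ≤ w' → w + w' = s → g ∈ gam H w → h₀ ∈ gam H w' →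
      IsPolyDeg d₁ F → IsPolyDeg d₂ G → d₁ + r₁ ≤ w → d₂ + r₂ ≤ w' → d₁ + d₂ ≤ DD →
      Cl s (r₁ + r₂) (fun n => ⁅g ^ F n, h₀ ^ G n⁆) := by
    intro DD
    induction DD with
    | zero =>
      apply ss_body IH1 PCs
      intro d₁ d₂ _ _ _ _ _ _ _ _ _ _ _ _ _ _ _ _ _ h
      omega
    | succ DD ih =>
      apply ss_body IH1 PCs
      intro d₁ d₂ g h₀ w w' r₁ r₂ F G h1 h2 h3 h4 h5 h6 h7 h8 h9 h10
      exact ih d₁ d₂ g h₀ w w' r₁ r₂ F G h1 h2 h3 h4 h5 h6 h7 h8 h9 (by omega)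
  intro d₁ d₂ g h₀ w w' r₁ r₂ F G h1 h2 h3 h4 h5 h6 h7 h8 h9
  exact key (d₁ + d₂) d₁ d₂ g h₀ w w' r₁ r₂ F G h1 h2 h3 h4 h5 h6 h7 h8 h9 le_rfl

lemma facFn_eq_one_of_zero {t : Fac H} (hz : t.2.2 = 0) (n : ℕ) : facFn t n = 1 := by
  have : t.2.2 n = 0 := by rw [hz]; rfl
  simp [facFn, this]

lemma p1_single {s : ℕ} (IH1 : EngP1 H (s + 1)) (PCs : EngPC H s) :
    ∀ (Lh : List (Fac H)) (A : Fac H) (i j r₁ r₂ : ℕ), 1 ≤ i → 1 ≤ j → i + j = s →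
      FacOK i r₁ A → (∀ t ∈ Lh, FacOK j r₂ t) →
      Cl s (r₁ + r₂) (fun n => ⁅facFn A n, listFn Lh n⁆) := by
  intro Lh
  induction Lh with
  | nil =>
    intro A i j r₁ r₂ _ _ _ _ _
    refine (Cl.one _ _).of_eq ?_
    intro n
    show ⁅facFn A n, listFn [] n⁆ = 1
    simp [listFn]
  | cons B Lh ih =>
    intro A i j r₁ r₂ hi hj hs hA hLh
    have hB : FacOK j r₂ B := hLh B (by simp)
    have hrest : ∀ t ∈ Lh, FacOK j r₂ t := fun t ht => hLh t (by simp [ht])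
    have hZ : Cl s (r₁ + r₂) (fun n => ⁅facFn A n, listFn Lh n⁆) :=
      ih A i j r₁ r₂ hi hj hs hA hrest
    have hBfn : Cl j r₂ (facFn B) := Cl.single hB
    have hconj : Cl s (r₁ + r₂) (fun n => ⁅facFn B n, ⁅facFn A n, listFn Lh n⁆⁆) := by
      have := IH1 j s r₂ (r₁ + r₂) _ _ hj (by omega) (by omega) hBfn hZ
      exact this.mono (by omega) (by omega)
    have hAB : Cl s (r₁ + r₂) (fun n => ⁅facFn A n, facFn B n⁆) := by
      rcases hA.2.2.2 with hokA | hzA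
      · rcases hB.2.2.2 with hokB | hzB
        · -- both genuine
          have hwA : i ≤ A.2.1 := hA.2.1
          have hwB : j ≤ B.2.1 := hB.2.1
          have hwA1 : 1 ≤ A.2.1 := hA.2.2.1
          have hwB1 : 1 ≤ B.2.1 := hB.2.2.1
          rcases Nat.lt_or_ge (A.2.1 + B.2.1) (s + 1) with hlt | hge
          · -- exactly level s : single-single lemma
            have hsum : A.2.1 + B.2.1 = s := by omega
            have := ss IH1 PCs (A.2.1 - r₁) (B.2.1 - r₂) A.1 B.1 A.2.1 B.2.1 r₁ r₂
              A.2.2 B.2.2 hwA1 hwB1 hsum hA.1 hB.1 hokA.2 hokB.2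
              (show A.2.1 - r₁ + r₁ ≤ A.2.1 by omega)
              (show B.2.1 - r₂ + r₂ ≤ B.2.1 by omega)
            exact this.of_eq (fun n => rfl)
          · -- higher level : induction hypothesis package
            have hAfn : Cl A.2.1 r₁ (facFn A) :=
              Cl.single ⟨hA.1, le_rfl, hwA1, Or.inl hokA⟩
            have hBfn' : Cl B.2.1 r₂ (facFn B) :=
              Cl.single ⟨hB.1, le_rfl, hwB1, Or.inl hokB⟩
            have := IH1 A.2.1 B.2.1 r₁ r₂ _ _ hwA1 hwB1 hge hAfn hBfn'
            exact this.mono (by omega) le_rfl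
        · refine (Cl.one _ _).of_eq ?_
          intro n
          rw [facFn_eq_one_of_zero hzB]
          simp
      · refine (Cl.one _ _).of_eq ?_
        intro n
        rw [facFn_eq_one_of_zero hzA]
        simp
    refine (hAB.mul (hconj.mul hZ)).of_eq ?_
    intro n
    rw [listFn_cons]
    group

lemma p1_lists {s : ℕ} (IH1 : EngP1 H (s + 1)) (PCs : EngPC H s) :
    ∀ (Lf Lh : List (Fac H)) (i j r₁ r₂ : ℕ), 1 ≤ i → 1 ≤ j → i + j = s →
      (∀ t ∈ Lf, FacOK i r₁ t) → (∀ t ∈ Lh, FacOK j r₂ t) →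
      Cl s (r₁ + r₂) (fun n => ⁅listFn Lf n, listFn Lh n⁆) := by
  intro Lf
  induction Lf with
  | nil =>
    intro Lh i j r₁ r₂ _ _ _ _ _
    refine (Cl.one _ _).of_eq ?_
    intro n
    show ⁅listFn [] n, listFn Lh n⁆ = 1
    simp [listFn]
  | cons A Lf ih =>
    intro Lh i j r₁ r₂ hi hj hs hLf hLh
    have hA : FacOK i r₁ A := hLf A (by simp)
    have hrest : ∀ t ∈ Lf, FacOK i r₁ t := fun t ht => hLf t (by simp [ht])
    have hZ : Cl s (r₁ + r₂) (fun n => ⁅listFn Lf n, listFn Lh n⁆) :=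
      ih Lh i j r₁ r₂ hi hj hs hrest hLh
    have hAfn : Cl i r₁ (facFn A) := Cl.single (hA.mono le_rfl le_rfl)
    have hconj : Cl s (r₁ + r₂) (fun n => ⁅facFn A n, ⁅listFn Lf n, listFn Lh n⁆⁆) := by
      have := IH1 i s r₁ (r₁ + r₂) _ _ hi (by omega) (by omega) hAfn hZ
      exact this.mono (by omega) (by omega)
    have hAh : Cl s (r₁ + r₂) (fun n => ⁅facFn A n, listFn Lh n⁆) :=
      p1_single IH1 PCs Lh A i j r₁ r₂ hi hj hs hA hLh
    refine ((hconj.mul hZ).mul hAh).of_eq ?_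
    intro n
    rw [listFn_cons]
    group

lemma engP1_step {s : ℕ} (IH1 : EngP1 H (s + 1)) (PCs : EngPC H s) : EngP1 H s := by
  intro i j r₁ r₂ f h hi hj hij hf hh
  rcases Nat.lt_or_ge (i + j) (s + 1) with hlt | hge
  · have hs : i + j = s := by omega
    obtain ⟨Lf, hLf, hfeq⟩ := hf
    obtain ⟨Lh, hLh, hheq⟩ := hh
    have := p1_lists IH1 PCs Lf Lh i j r₁ r₂ hi hj hs hLf hLh
    rw [← hs] at this
    exact this.of_eq (fun n => by rw [hfeq n, hheq n])
  · exact IH1 i j r₁ r₂ f h hi hj hge hf hh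

lemma engPC_step {s : ℕ} (IH1 : EngP1 H (s + 1)) (IHC : EngPC H (s + 1)) : EngPC H s := by
  intro j r f u hj hsj h0 hu hrec
  obtain ⟨L, hL, hueq⟩ := hu
  refine collect_aux IH1 IHC L j r f (fun _ => 1) hj hsj h0 hL (Cl.one _ _) ?_
  intro n
  rw [hrec n, hueq n, mul_one]

/-- The master engine theorem. -/
theorem engine (hH : lowerCentralSeries H c = ⊥) :
    ∀ m s, c + 1 ≤ s + m → EngP1 H s ∧ EngPC H s := by
  intro m
  induction m with
  | zero =>
    intro s hs
    exact ⟨degenerateP1 hH (by omega), degeneratePC hH (by omega)⟩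
  | succ m ih =>
    intro s hs
    by_cases hcs : c + 1 ≤ s
    · exact ⟨degenerateP1 hH hcs, degeneratePC hH hcs⟩
    · obtain ⟨IH1, IHC⟩ := ih (s + 1) (by omega)
      have PCs : EngPC H s := engPC_step IH1 IHC
      exact ⟨engP1_step IH1 PCs, PCs⟩

/-! ## The key consequence at exponent `p` -/

theorem main_key {p : ℕ} (hH : lowerCentralSeries H c = ⊥) (hp : p.Prime) (hcp : c < p)
    (x y : H) (j : ℕ) (hj : 1 ≤ j) (hy : y ∈ gam H j) :
    ∃ l : List H, (∀ d ∈ l, d ∈ gam H (j + 1)) ∧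
      x ^ p * y ^ p = (x * y) ^ p * (l.map (fun d => d ^ p)).prod := by
  obtain ⟨P1₂, PC₂⟩ := engine hH c 2 (by omega)
  have hx1 : x ∈ gam H 1 := Subgroup.mem_top x
  have hxy1 : x * y ∈ gam H 1 := Subgroup.mem_top _
  have hy1 : y ∈ gam H 1 := Subgroup.mem_top y
  -- the function φ n = ((x y)^n)⁻¹ x^n y^n
  set φ : ℕ → H := fun n => ((x * y) ^ (n : ℤ))⁻¹ * (x ^ (n : ℤ) * y ^ (n : ℤ)) with hφdef
  have hφ0 : φ 0 = 1 := by simp [hφdef]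
  -- class functions
  have hconsty : Cl j 1 (fun _ : ℕ => y) := Cl.const hy hj hj
  have hxneg : Cl 1 0 (fun n : ℕ => x ^ (-(n : ℤ))) := by
    refine Cl.single (t := (x, 1, fun n : ℕ => -(n : ℤ))) ⟨hx1, le_rfl, le_rfl,
      Or.inl ⟨Nat.zero_le _, ?_⟩⟩
    exact isPolyDeg_cast.neg
  have hw : Cl (j + 1) 1 (fun n => ⁅y, x ^ (-(n : ℤ))⁆) := by
    have := P1₂ j 1 1 0 _ _ hj le_rfl (by omega) hconsty hxneg
    exact this.mono le_rfl le_rfl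
  have hyfn : Cl 1 0 (fun n : ℕ => y ^ (-(n : ℤ) + -1)) := by
    refine Cl.single (t := (y, 1, fun n : ℕ => -(n : ℤ) + -1)) ⟨hy1, le_rfl, le_rfl,
      Or.inl ⟨Nat.zero_le _, ?_⟩⟩
    exact isPolyDeg_cast.neg.add (isPolyDeg_const (-1) 1)
  have hcomm2 : Cl (j + 1) 1
      (fun n => ⁅y ^ (-(n : ℤ) + -1), ⁅y, x ^ (-(n : ℤ))⁆⁆) := by
    have := P1₂ 1 (j + 1) 0 1 _ _ le_rfl (by omega) (by omega) hyfn hw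
    exact this.mono (by omega) (by omega)
  have hu : Cl (j + 1) (0 + 1)
      (fun n => ⁅y ^ (-(n : ℤ) + -1), ⁅y, x ^ (-(n : ℤ))⁆⁆ * ⁅y, x ^ (-(n : ℤ))⁆) :=
    hcomm2.mul hw
  have hrec : ∀ n, φ (n + 1) = φ n *
      (⁅y ^ (-(n : ℤ) + -1), ⁅y, x ^ (-(n : ℤ))⁆⁆ * ⁅y, x ^ (-(n : ℤ))⁆) := by
    intro n
    simp only [hφdef]
    have hcast : ((n + 1 : ℕ) : ℤ) = (n : ℤ) + 1 := by push_cast; ring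
    have e1 : ((x * y) ^ ((n : ℤ) + 1))⁻¹ = ((x * y) ^ (n : ℤ))⁻¹ * (x * y)⁻¹ := by
      rw [show (n : ℤ) + 1 = 1 + (n : ℤ) from by ring, zpow_one_add, mul_inv_rev]
    rw [hcast, e1, zpow_add_one x, zpow_add_one y]
    group
  have hφV : ClV (j + 1) 0 φ := PC₂ (j + 1) 0 φ _ (by omega) (by omega) hφ0 hu hrec
  -- evaluate at p
  obtain ⟨L, hLfac, hφeq⟩ := hφV
  refine ⟨L.map (fun t => t.1 ^ (t.2.2 p / (p : ℤ))), ?_, ?_⟩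
  · intro d hd
    rw [List.mem_map] at hd
    obtain ⟨t, ht, rfl⟩ := hd
    exact gam_le (hLfac t ht).1.2.1 ((gam H t.2.1).zpow_mem (hLfac t ht).1.1 _)
  · have hfac : ∀ t ∈ L, facFn t p = (t.1 ^ (t.2.2 p / (p : ℤ))) ^ p := by
      intro t ht
      obtain ⟨⟨hmem, hlev, hw1, hdisj⟩, h0⟩ := hLfac t ht
      rcases hdisj with ⟨_, hdeg⟩ | hz
      · rcases Nat.lt_or_ge c t.2.1 with hbig | hsmall
        · -- weight exceeds the class : the element is trivial
          have : t.1 = 1 := by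
            have hb : gam H t.2.1 = ⊥ := gam_eq_bot hH (by omega)
            rw [hb] at hmem
            simpa using hmem
          simp [facFn, this]
        · -- divisibility
          have hdeg' : IsPolyDeg t.2.1 t.2.2 := by simpa using hdeg
          have hdvd : (p : ℤ) ∣ t.2.2 p := hdeg'.prime_dvd_eval hp h0 (by omega)
          have : t.2.2 p = (p : ℤ) * (t.2.2 p / (p : ℤ)) := (Int.mul_ediv_cancel' hdvd).symm
          show t.1 ^ t.2.2 p = _
          conv_lhs => rw [this]
          rw [mul_comm ((p : ℤ)) _, zpow_mul, zpow_natCast]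
      · have h1 : t.2.2 p = 0 := by rw [hz]; rfl
        simp [facFn, h1]
    have hprod : φ p = ((L.map (fun t => t.1 ^ (t.2.2 p / (p : ℤ)))).map
        (fun d => d ^ p)).prod := by
      rw [hφeq p, listFn, List.map_map]
      congr 1
      exact List.map_congr_left (fun t ht => by simpa using hfac t ht)
    have : x ^ p * y ^ p = (x * y) ^ p * φ p := by
      simp only [hφdef]
      rw [← zpow_natCast x p, ← zpow_natCast y p, ← zpow_natCast (x * y) p]
      group
    rw [this, hprod]

/-! ## Products of p-th powers -/

lemma conj_pow_aux (T d : H) (p : ℕ) : (T⁻¹ * d * T) ^ p = T⁻¹ * d ^ p * T := by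
  induction p with
  | zero => simp
  | succ k ihp => rw [pow_succ, pow_succ, ihp]; group

lemma conj_prodpowers (p : ℕ) (T : H) (l : List H) :
    T⁻¹ * (l.map (fun d => d ^ p)).prod * T
      = ((l.map (fun d => T⁻¹ * d * T)).map (fun d => d ^ p)).prod := by
  induction l with
  | nil => simp
  | cons d l ih =>
    simp only [List.map_cons, List.prod_cons]
    rw [← ih, conj_pow_aux]
    group

lemma claim_level {p : ℕ} (hH : lowerCentralSeries H c = ⊥) (hp : p.Prime) (hcp : c < p)
    (j : ℕ) (hj : 1 ≤ j) :
    ∀ (l : List H) (w : H), (∀ d ∈ l, d ∈ gam H j) →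
      ∃ l' : List H, (∀ d ∈ l', d ∈ gam H (j + 1)) ∧
        w ^ p * (l.map (fun d => d ^ p)).prod
          = (w * l.prod) ^ p * (l'.map (fun d => d ^ p)).prod := by
  intro l
  induction l with
  | nil =>
    intro w _
    exact ⟨[], by simp, by simp⟩
  | cons y l ih =>
    intro w hmem
    obtain ⟨ld, hld, hkey⟩ := main_key hH hp hcp w y j hj (hmem y (by simp))
    obtain ⟨l'', hl'', hih⟩ := ih (w * y) (fun d hd => hmem d (by simp [hd]))
    refine ⟨l'' ++ ld.map (fun d => ((l.map (fun d => d ^ p)).prod)⁻¹ * d *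
      (l.map (fun d => d ^ p)).prod), ?_, ?_⟩
    · intro d hd
      rcases List.mem_append.mp hd with h | h
      · exact hl'' d h
      · rw [List.mem_map] at h
        obtain ⟨d₀, hd₀, rfl⟩ := h
        have hnorm : (lowerCentralSeries H ((j + 1) - 1)).Normal := lowerCentralSeries_normal _
        have := hnorm.conj_mem d₀ (hld d₀ hd₀) ((l.map (fun d => d ^ p)).prod)⁻¹
        simpa [mul_assoc, gam] using this
    · have step1 : w ^ p * (((y :: l)).map (fun d => d ^ p)).prod
          = ((w * y) ^ p * (ld.map (fun d => d ^ p)).prod) *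
            (l.map (fun d => d ^ p)).prod := by
        simp only [List.map_cons, List.prod_cons]
        rw [← mul_assoc, hkey]
      rw [step1]
      have step2 : (ld.map (fun d => d ^ p)).prod * (l.map (fun d => d ^ p)).prod
          = (l.map (fun d => d ^ p)).prod *
            ((ld.map (fun d => ((l.map (fun d => d ^ p)).prod)⁻¹ * d *
              (l.map (fun d => d ^ p)).prod)).map (fun d => d ^ p)).prod := by
        rw [← conj_prodpowers]
        group
      rw [mul_assoc, step2, ← mul_assoc, hih]
      rw [List.map_append, List.prod_append]
      simp only [List.prod_cons]
      group

lemma q_level {p : ℕ} (hH : lowerCentralSeries H c = ⊥) (hp : p.Prime) (hcp : c < p) :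
    ∀ (m j : ℕ), 1 ≤ j → c + 1 ≤ j + m → ∀ (w : H) (l : List H),
      (∀ d ∈ l, d ∈ gam H j) →
      ∃ z : H, w ^ p * (l.map (fun d => d ^ p)).prod = z ^ p := by
  intro m
  induction m with
  | zero =>
    intro j hj hcm w l hmem
    refine ⟨w, ?_⟩
    have hone : ∀ d ∈ l, d = 1 := by
      intro d hd
      have := hmem d hd
      rw [gam_eq_bot hH (by omega)] at this
      simpa using this
    have : (l.map (fun d => d ^ p)).prod = 1 := by
      apply List.prod_eq_one
      intro a ha
      rw [List.mem_map] at ha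
      obtain ⟨d, hd, rfl⟩ := ha
      rw [hone d hd, one_pow]
    rw [this, mul_one]
  | succ m ih =>
    intro j hj hcm w l hmem
    obtain ⟨l', hl', heq⟩ := claim_level hH hp hcp j hj l w hmem
    obtain ⟨z, hz⟩ := ih (j + 1) (by omega) (by omega) (w * l.prod) l' hl'
    exact ⟨z, by rw [heq, hz]⟩

/-- Any product of `p`-th powers is a `p`-th power (in a group of class `< p`). -/
theorem prodpow_eq_pow {p : ℕ} (hH : lowerCentralSeries H c = ⊥) (hp : p.Prime) (hcp : c < p)
    (l : List H) : ∃ z : H, (l.map (fun d => d ^ p)).prod = z ^ p := by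
  obtain ⟨z, hz⟩ := q_level hH hp hcp c 1 le_rfl (by omega) 1 l
    (fun d _ => Subgroup.mem_top d)
  exact ⟨z, by rw [← hz, one_pow, one_mul]⟩

/-! ## Transfer to subgroups -/

lemma lcs_bot_subgroup {G : Type*} [Group G] {c : ℕ} (h : lowerCentralSeries G c = ⊥)
    (K : Subgroup G) : lowerCentralSeries ↥K c = ⊥ := by
  have hmap := lowerCentralSeries_map_subtype_le K c
  rw [h, le_bot_iff, Subgroup.map_eq_bot_iff, Subgroup.ker_subtype, le_bot_iff] at hmap
  exact hmap

lemma map_subtype_commutator {G : Type*} [Group G] (K : Subgroup G) :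
    Subgroup.map K.subtype (lowerCentralSeries ↥K 1) = ⁅K, K⁆ := by
  rw [lowerCentralSeries_one, commutator_def, Subgroup.map_commutator]
  congr 1 <;>
    rw [← MonoidHom.range_eq_map, Subgroup.range_subtype]



lemma list_lift {G : Type*} [Group G] (M : Subgroup G) :
    ∀ (l : List G), (∀ d ∈ l, d ∈ M) → ∃ lm : List ↥M, lm.map Subtype.val = l := by
  intro l
  induction l with
  | nil => exact fun _ => ⟨[], rfl⟩
  | cons d l ih =>
    intro h
    obtain ⟨lm, hlm⟩ := ih (fun x hx => h x (by simp [hx]))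
    exact ⟨⟨d, h d (by simp)⟩ :: lm, by simp [hlm]⟩

/-- A product of `p`-th powers of elements of a subgroup of class `< p` is the `p`-th power
of an element of that subgroup. -/
lemma prodpow_in_subgroup {G : Type*} [Group G] {c₀ p : ℕ} (M : Subgroup G)
    (hM : lowerCentralSeries ↥M c₀ = ⊥) (hp : p.Prime) (hcp : c₀ < p)
    (l : List G) (hl : ∀ d ∈ l, d ∈ M) :
    ∃ z : G, z ∈ M ∧ (l.map (fun d => d ^ p)).prod = z ^ p := by
  obtain ⟨lm, rfl⟩ := list_lift M l hl
  obtain ⟨z, hz⟩ := prodpow_eq_pow hM hp hcp lm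
  refine ⟨(z : G), z.2, ?_⟩
  have h2 : (lm.map (fun d => d ^ p)).map (M.subtype) = (lm.map Subtype.val).map
      (fun d => d ^ p) := by
    rw [List.map_map, List.map_map]
    apply List.map_congr_left
    intro x _
    simp
  have h1 : ((lm.map (fun d => d ^ p)).map (M.subtype)).prod
      = M.subtype ((lm.map (fun d => d ^ p)).prod) := List.prod_hom _ M.subtype
  rw [← h2, h1, hz]
  simp

end Engine
end RegAux

/-- Every finite `p`-group of nilpotency class strictly less than `p` is regular: for all
`a, b` there is `c` in the derived subgroup of `⟨a,b⟩` with `a^p b^p = (ab)^p c^p`. -/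
theorem isRegular_of_nilpotencyClass_lt (p : ℕ) (hp : p.Prime) (G : Type*) [Group G] [Finite G]
    (hG : IsPGroup p G) [Group.IsNilpotent G] (hc : Group.nilpotencyClass G < p) :
    ∀ a b : G, ∃ c ∈ ⁅Subgroup.closure {a, b}, Subgroup.closure {a, b}⁆,
      a ^ p * b ^ p = (a * b) ^ p * c ^ p := by
  intro a b
  have hGc : RegAux.lowerCentralSeries G (Group.nilpotencyClass G) = ⊥ :=
    RegAux.lowerCentralSeries_nilpotencyClass
  have ha : a ∈ Subgroup.closure {a, b} := Subgroup.subset_closure (by simp)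
  have hb : b ∈ Subgroup.closure {a, b} := Subgroup.subset_closure (by simp)
  have hKc : RegAux.lowerCentralSeries ↥(Subgroup.closure {a, b}) (Group.nilpotencyClass G) = ⊥ :=
    RegAux.lcs_bot_subgroup hGc _
  obtain ⟨ld, hld, hkey⟩ := RegAux.main_key (H := ↥(Subgroup.closure {a, b})) hKc hp hc
    (⟨a, ha⟩ : ↥(Subgroup.closure {a, b})) (⟨b, hb⟩ : ↥(Subgroup.closure {a, b})) 1 le_rfl
    (Subgroup.mem_top _)
  have hMc : RegAux.lowerCentralSeries ↥(RegAux.lowerCentralSeries ↥(Subgroup.closure {a, b}) 1)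
      (Group.nilpotencyClass G) = ⊥ := RegAux.lcs_bot_subgroup hKc _
  obtain ⟨z, hzM, hz⟩ := RegAux.prodpow_in_subgroup
    (RegAux.lowerCentralSeries ↥(Subgroup.closure {a, b}) 1) hMc hp hc ld (fun d hd => hld d hd)
  have hfinal : (⟨a, ha⟩ : ↥(Subgroup.closure {a, b})) ^ p * (⟨b, hb⟩ : _) ^ p
      = ((⟨a, ha⟩ : ↥(Subgroup.closure {a, b})) * ⟨b, hb⟩) ^ p * z ^ p := by
    rw [hkey, hz]
  have hzmem : (z : G) ∈ ⁅Subgroup.closure {a, b}, Subgroup.closure {a, b}⁆ := by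
    have h3 : (z : G) ∈ Subgroup.map (Subgroup.closure {a, b}).subtype
        (RegAux.lowerCentralSeries ↥(Subgroup.closure {a, b}) 1) := ⟨z, hzM, rfl⟩
    rwa [RegAux.map_subtype_commutator] at h3
  refine ⟨(z : G), hzmem, ?_⟩
  have := congrArg (Subgroup.closure {a, b}).subtype hfinal
  simpa [map_mul, map_pow] using this
end

section
/- The wreath product G = C_p ≀ C_p = (C_p)^p ⋊ C_p (with C_p acting by cyclically permuting coordinates) has exponent p², generator exponent p, and nilpotency class exactly p. -/
/-- The automorphism of `(C_p)^p = (ZMod p → Multiplicative (ZMod p))` shifting coordinates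
by `k`. -/
def shiftAut (p : ℕ) (k : ZMod p) : MulAut (ZMod p → Multiplicative (ZMod p)) where
  toFun f i := f (i + k)
  invFun f i := f (i - k)
  left_inv f := by funext i; simp
  right_inv f := by funext i; simp
  map_mul' f g := rfl

/-- The action of `C_p` on `(C_p)^p` by cyclically permuting coordinates. -/
def shiftHom (p : ℕ) :
    Multiplicative (ZMod p) →* MulAut (ZMod p → Multiplicative (ZMod p)) where
  toFun k := shiftAut p k.toAdd
  map_one' := by
    ext f i
    simp [shiftAut]
  map_mul' k l := by
    ext f i
    simp [shiftAut]
    ring_nf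

namespace WreathAux

variable (p : ℕ) [Fact p.Prime]

open scoped commutatorElement

abbrev W := ZMod p → ZMod p
abbrev V := ZMod p → Multiplicative (ZMod p)
abbrev C := Multiplicative (ZMod p)
abbrev G := V p ⋊[shiftHom p] C p

instance : NeZero p := ⟨(Fact.out : p.Prime).pos.ne'⟩
instance : Fact (1 < p) := ⟨(Fact.out : p.Prime).one_lt⟩

/-! ### Linear algebra on `W` -/

def sig : Module.End (ZMod p) (W p) where
  toFun f i := f (i + 1)
  map_add' _ _ := rfl
  map_smul' _ _ := rfl

lemma sig_pow (n : ℕ) (f : W p) (i : ZMod p) : ((sig p ^ n) f) i = f (i + n) := by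
  induction n generalizing f i with
  | zero => simp
  | succ n ih =>
    rw [pow_succ, Module.End.mul_apply, ih, Nat.cast_succ]
    simp only [sig, LinearMap.coe_mk, AddHom.coe_mk]
    ring_nf

abbrev Pl := Polynomial (ZMod p)

noncomputable def A : Pl p →ₐ[ZMod p] Module.End (ZMod p) (W p) := Polynomial.aeval (sig p)

def Δ : Module.End (ZMod p) (W p) := sig p - 1

lemma sig_pow_p : sig p ^ p = 1 := by
  apply LinearMap.ext; intro f; funext i
  rw [Module.End.one_apply, sig_pow]
  norm_num

lemma delta_pow_p : Δ p ^ p = 0 := by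
  have h1 : (Polynomial.X - 1 : Pl p) ^ p = Polynomial.X ^ p - 1 := by
    simpa using sub_pow_char (Polynomial.X : Pl p) 1
  have := congrArg (A p) h1
  simp only [map_pow, map_sub, map_one, A, Polynomial.aeval_X] at this
  rw [Δ, this, sig_pow_p]
  simp

lemma X_sub_one_ne : (Polynomial.X - 1 : Pl p) ≠ 0 := by
  rw [← Polynomial.C_1]
  exact Polynomial.X_sub_C_ne_zero 1

lemma delta_pow_pred : Δ p ^ (p - 1) = ∑ j ∈ Finset.range p, sig p ^ j := by
  have hp := (Fact.out : p.Prime).one_lt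
  have h1 : ((Polynomial.X - 1 : Pl p) ^ (p-1)) * (Polynomial.X - 1)
      = (∑ j ∈ Finset.range p, Polynomial.X ^ j) * (Polynomial.X - 1) := by
    rw [geom_sum_mul, ← pow_succ, Nat.sub_add_cancel hp.le]
    simpa using sub_pow_char (Polynomial.X : Pl p) 1
  have h2 : (Polynomial.X - 1 : Pl p) ^ (p-1) = ∑ j ∈ Finset.range p, Polynomial.X ^ j :=
    mul_right_cancel₀ (X_sub_one_ne p) h1
  have := congrArg (A p) h2
  simp only [map_pow, map_sub, map_one, map_sum, A, Polynomial.aeval_X] at this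
  rw [Δ, this]

def δW : W p := fun i => if i = 0 then 1 else 0

lemma sum_delta : ∑ j ∈ Finset.range p, (δW p) ((j : ZMod p)) = 1 := by
  have hp := (Fact.out : p.Prime).pos
  rw [Finset.sum_eq_single_of_mem 0 (Finset.mem_range.2 hp)]
  · simp [δW]
  · intro j hj hj0
    have hne : ((j : ZMod p)) ≠ 0 := by
      rw [Ne, ZMod.natCast_eq_zero_iff]
      intro h
      exact hj0 (Nat.eq_zero_of_dvd_of_lt h (Finset.mem_range.1 hj))
    simp [δW, hne]

lemma delta_pred_eval : ((Δ p ^ (p-1)) (δW p)) 0 = 1 := by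
  rw [delta_pow_pred, LinearMap.sum_apply, Finset.sum_apply]
  have : ∀ j ∈ Finset.range p, ((sig p ^ j) (δW p)) 0 = (δW p) ((j:ZMod p)) := by
    intro j _; rw [sig_pow]; ring_nf
  rw [Finset.sum_congr rfl this, sum_delta]

lemma comm_sig_delta : Commute (sig p) (Δ p) :=
  (Commute.refl (sig p)).sub_right (Commute.one_right (sig p))

lemma endo_eq (m k : ℕ) :
    (sig p ^ m - 1) * Δ p ^ k = Δ p ^ (k+1) * (∑ i ∈ Finset.range m, sig p ^ i) := by
  have h1 : (sig p ^ m - 1) = (∑ i ∈ Finset.range m, sig p ^ i) * Δ p := by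
    rw [Δ, geom_sum_mul]
  have hc : Commute (∑ i ∈ Finset.range m, sig p ^ i) (Δ p ^ (k+1)) := by
    apply Commute.sum_left
    intro i _
    exact ((comm_sig_delta p).pow_pow i (k+1))
  rw [h1, mul_assoc, ← pow_succ', hc.eq]

/-! ### The group `G` -/

lemma shiftHom_apply (k : C p) (f : V p) (i : ZMod p) :
    ((shiftHom p k) f) i = f (i + k.toAdd) := rfl

def j (w : W p) : G p := SemidirectProduct.inl (fun i => Multiplicative.ofAdd (w i))

lemma j_left (w : W p) (i : ZMod p) : (j p w).left i = Multiplicative.ofAdd (w i) := rfl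
lemma j_right (w : W p) : (j p w).right = 1 := rfl

lemma j_add (v w : W p) : j p (v + w) = j p v * j p w := by
  rw [j, j, j, ← map_mul]
  congr 1

lemma j_zero : j p 0 = 1 := by
  have : (fun i => Multiplicative.ofAdd ((0 : W p) i)) = (1 : V p) := funext fun i => ofAdd_zero
  rw [j, this, map_one]

lemma j_neg (w : W p) : j p (-w) = (j p w)⁻¹ := by
  rw [eq_inv_iff_mul_eq_one, ← j_add]
  simp [j_zero]

lemma j_ne_one (w : W p) (i : ZMod p) (hw : w i ≠ 0) : j p w ≠ 1 := by
  intro h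
  have := congrArg (fun g : G p => Multiplicative.toAdd (SemidirectProduct.left g i)) h
  simp only [j_left, toAdd_ofAdd, SemidirectProduct.one_left, Pi.one_apply, toAdd_one] at this
  exact hw this

def toW (a : V p) : W p := fun i => Multiplicative.toAdd (a i)

lemma toW_j (w : W p) : toW p (j p w).left = w := rfl

lemma sig_val (k : C p) (w : W p) (i : ZMod p) :
    ((sig p ^ (Multiplicative.toAdd k).val) w) i = w (i + Multiplicative.toAdd k) := by
  rw [sig_pow, ZMod.natCast_rightInverse _]

lemma comm_general (g h : G p) :
    ⁅g, h⁆ = j p ((sig p ^ (Multiplicative.toAdd g.right).val - 1) (toW p h.left)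
      - (sig p ^ (Multiplicative.toAdd h.right).val - 1) (toW p g.left)) := by
  have habel : ∀ x y : C p, x * y * x⁻¹ * y⁻¹ = 1 := fun x y => by
    rw [mul_comm x y]; group
  apply SemidirectProduct.ext
  · funext i
    show Multiplicative.toAdd _ = Multiplicative.toAdd _
    simp only [commutatorElement_def, SemidirectProduct.mul_left, SemidirectProduct.mul_right,
      SemidirectProduct.inv_left, SemidirectProduct.inv_right, j_left, shiftHom_apply,
      Pi.mul_apply, Pi.inv_apply, toAdd_mul, toAdd_inv, toAdd_ofAdd,
      Pi.sub_apply, LinearMap.sub_apply, Module.End.one_apply, sig_val, toW]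
    ring
  · show _ = (1 : C p)
    simp only [commutatorElement_def, SemidirectProduct.mul_right, SemidirectProduct.inv_right,
      j_right]
    exact habel _ _

lemma comm_j (w : W p) (h : G p) :
    ⁅j p w, h⁆ = j p (-((sig p ^ (Multiplicative.toAdd h.right).val - 1) w)) := by
  rw [comm_general, j_right, toW_j]
  congr 1
  simp

/-! ### The subgroups `N k` and the lower central series -/

def N (k : ℕ) : Subgroup (G p) where
  carrier := {g | ∃ w, g = j p ((Δ p ^ k) w)}
  one_mem' := ⟨0, by rw [map_zero, j_zero]⟩
  mul_mem' := by
    rintro a b ⟨v, rfl⟩ ⟨w, rfl⟩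
    exact ⟨v + w, by rw [map_add, j_add]⟩
  inv_mem' := by
    rintro a ⟨v, rfl⟩
    exact ⟨-v, by rw [map_neg, j_neg]⟩

lemma comm_mem_N1 (g h : G p) : ⁅g, h⁆ ∈ N p 1 := by
  rw [comm_general]
  refine ⟨(∑ i ∈ Finset.range (Multiplicative.toAdd g.right).val, sig p ^ i) (toW p h.left)
    - (∑ i ∈ Finset.range (Multiplicative.toAdd h.right).val, sig p ^ i) (toW p g.left), ?_⟩
  congr 1
  rw [map_sub]
  congr 1
  · have := congrArg (fun e : Module.End (ZMod p) (W p) => e (toW p h.left))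
      (endo_eq p (Multiplicative.toAdd g.right).val 0)
    simpa using this
  · have := congrArg (fun e : Module.End (ZMod p) (W p) => e (toW p g.left))
      (endo_eq p (Multiplicative.toAdd h.right).val 0)
    simpa using this

lemma comm_mem_N_succ (k : ℕ) (g h : G p) (hg : g ∈ N p k) : ⁅g, h⁆ ∈ N p (k+1) := by
  obtain ⟨w, rfl⟩ := hg
  rw [comm_j]
  refine ⟨-((∑ i ∈ Finset.range (Multiplicative.toAdd h.right).val, sig p ^ i) w), ?_⟩
  congr 1
  rw [map_neg]
  congr 1
  have := congrArg (fun e : Module.End (ZMod p) (W p) => e w)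
    (endo_eq p (Multiplicative.toAdd h.right).val k)
  simpa using this

lemma lcs_le_N : ∀ k, Subgroup.lowerCentralSeries (⊤ : Subgroup (G p)) (k+1) ≤ N p (k+1) := by
  intro k
  induction k with
  | zero =>
    rw [Subgroup.lowerCentralSeries_succ]
    apply Subgroup.closure_le _ |>.2
    rintro x ⟨g, _, h, _, rfl⟩
    exact comm_mem_N1 p g h
  | succ k ih =>
    rw [Subgroup.lowerCentralSeries_succ]
    apply Subgroup.closure_le _ |>.2
    rintro x ⟨g, hg, h, _, rfl⟩
    exact comm_mem_N_succ p (k+1) g h (ih hg)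

lemma lcs_p_eq_bot : Subgroup.lowerCentralSeries (⊤ : Subgroup (G p)) p = ⊥ := by
  have hp := (Fact.out : p.Prime).one_lt
  rw [eq_bot_iff]
  intro g hg
  have : g ∈ N p p := by
    have h := lcs_le_N p (p - 1)
    rw [Nat.sub_add_cancel hp.le] at h
    exact h hg
  obtain ⟨w, rfl⟩ := this
  rw [delta_pow_p]
  simp only [LinearMap.zero_apply, j_zero]
  exact Subgroup.one_mem _

def xC : C p := Multiplicative.ofAdd 1

lemma lcs_mem (k : ℕ) (w : W p) : j p ((Δ p ^ k) w) ∈ Subgroup.lowerCentralSeries (⊤ : Subgroup (G p)) k := by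
  induction k generalizing w with
  | zero => exact Subgroup.mem_top _
  | succ k ih =>
    have hx : (Multiplicative.toAdd (SemidirectProduct.inr (φ := shiftHom p) (xC p)).right).val
        = 1 := by
      rw [SemidirectProduct.right_inr]
      show (Multiplicative.toAdd (Multiplicative.ofAdd (1 : ZMod p))).val = 1
      rw [toAdd_ofAdd, ZMod.val_one]
    have key : ⁅j p ((Δ p ^ k) (-w)), SemidirectProduct.inr (φ := shiftHom p) (xC p)⁆
        = j p ((Δ p ^ (k+1)) w) := by
      rw [comm_j, hx]
      congr 1
      rw [pow_one]
      have : (sig p - 1) ((Δ p ^ k) (-w)) = (Δ p ^ (k+1)) (-w) := by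
        rw [← Δ, ← Module.End.mul_apply, ← pow_succ']
      rw [this, map_neg, neg_neg]
    rw [Subgroup.lowerCentralSeries_succ, ← key]
    exact Subgroup.commutator_mem_commutator (ih (-w)) (Subgroup.mem_top _)

lemma lcs_pred_ne_bot : Subgroup.lowerCentralSeries (⊤ : Subgroup (G p)) (p - 1) ≠ ⊥ := by
  intro h
  have hmem := lcs_mem p (p-1) (δW p)
  rw [h, Subgroup.mem_bot] at hmem
  exact j_ne_one p _ 0 (by rw [delta_pred_eval]; exact one_ne_zero) hmem

/-! ### Exponent -/

lemma c_pow_p (x : C p) : x ^ p = 1 := by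
  apply Multiplicative.toAdd.injective
  rw [toAdd_pow, toAdd_one, nsmul_eq_mul, ZMod.natCast_self, zero_mul]

lemma v_pow_p (f : V p) : f ^ p = 1 := by
  funext i
  exact c_pow_p p (f i)

lemma pow_p_sq (g : G p) : g ^ (p^2) = 1 := by
  rw [pow_two, pow_mul]
  have h1 : (g ^ p).right = 1 := by
    have : (g ^ p).right = g.right ^ p := map_pow SemidirectProduct.rightHom g p
    rw [this, c_pow_p]
  have h2 : g ^ p = SemidirectProduct.inl (g ^ p).left := by
    conv_lhs => rw [← SemidirectProduct.inl_left_mul_inr_right (g ^ p)]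
    rw [h1, map_one, mul_one]
  rw [h2, ← map_pow, v_pow_p, map_one]

def δV : V p := fun i => Multiplicative.ofAdd (δW p i)

lemma mk_pow (a : V p) (k : C p) (n : ℕ) :
    (⟨a, k⟩ : G p) ^ n = ⟨∏ i ∈ Finset.range n, (shiftHom p (k^i)) a, k^n⟩ := by
  induction n with
  | zero =>
    apply SemidirectProduct.ext <;> simp
  | succ n ih =>
    rw [pow_succ, ih]
    apply SemidirectProduct.ext
    · rw [SemidirectProduct.mul_left]
      show _ = ∏ i ∈ Finset.range (n+1), (shiftHom p (k^i)) a
      rw [Finset.prod_range_succ]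
    · rw [SemidirectProduct.mul_right]
      show k ^ n * k = k ^ (n+1)
      rw [pow_succ]

def gen : G p := ⟨δV p, Multiplicative.ofAdd 1⟩

lemma gen_pow_p_ne_one : (gen p) ^ p ≠ 1 := by
  intro h
  rw [gen, mk_pow] at h
  have hleft := congrArg (fun g : G p => Multiplicative.toAdd (SemidirectProduct.left g 0)) h
  simp only [SemidirectProduct.one_left, Pi.one_apply, toAdd_one] at hleft
  rw [Finset.prod_apply, toAdd_prod] at hleft
  have heval : ∀ i ∈ Finset.range p,
      Multiplicative.toAdd (((shiftHom p ((Multiplicative.ofAdd (1:ZMod p))^i)) (δV p)) 0)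
        = (δW p) ((i : ZMod p)) := by
    intro i _
    rw [shiftHom_apply]
    show Multiplicative.toAdd (Multiplicative.ofAdd ((δW p) _)) = _
    rw [toAdd_ofAdd]
    congr 1
    rw [toAdd_pow, toAdd_ofAdd, nsmul_eq_mul, mul_one, zero_add]
  rw [Finset.sum_congr rfl heval, sum_delta] at hleft
  exact one_ne_zero hleft

lemma exponent_eq : Monoid.exponent (G p) = p ^ 2 := by
  apply Nat.dvd_antisymm
  · exact Monoid.exponent_dvd_of_forall_pow_eq_one (pow_p_sq p)
  · have : orderOf (gen p) = p ^ 2 := by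
      have h1 : ¬ (gen p) ^ p ^ 1 = 1 := by rw [pow_one]; exact gen_pow_p_ne_one p
      exact orderOf_eq_prime_pow h1 (pow_p_sq p (gen p))
    rw [← this]
    exact Monoid.order_dvd_exponent (gen p)

/-! ### genExp -/

lemma delta_ne_one : δV p ≠ 1 := by
  intro h
  have := congrArg (fun f : V p => Multiplicative.toAdd (f 0)) h
  simp only [δV, δW, toAdd_ofAdd, Pi.one_apply, toAdd_one, if_pos rfl] at this
  exact one_ne_zero this

lemma x_ne_one : (Multiplicative.ofAdd (1 : ZMod p)) ≠ (1 : C p) := by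
  intro h
  have := congrArg Multiplicative.toAdd h
  rw [toAdd_ofAdd, toAdd_one] at this
  exact one_ne_zero this

lemma order_inr_x : orderOf (SemidirectProduct.inr (φ := shiftHom p) (Multiplicative.ofAdd 1)) = p := by
  rw [orderOf_injective _ SemidirectProduct.inr_injective]
  exact orderOf_eq_prime (c_pow_p p _) (x_ne_one p)

lemma order_inl_delta : orderOf (SemidirectProduct.inl (φ := shiftHom p) (δV p)) = p := by
  rw [orderOf_injective _ SemidirectProduct.inl_injective]
  exact orderOf_eq_prime (v_pow_p p _) (delta_ne_one p)

/-- one coordinate function -/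
def single (i : ZMod p) (c : C p) : V p := fun jj => if jj = i then c else 1

lemma single_eq_shift (i : ZMod p) :
    single p i (Multiplicative.ofAdd 1) = (shiftHom p (Multiplicative.ofAdd (-i))) (δV p) := by
  funext jj
  rw [shiftHom_apply, toAdd_ofAdd]
  show _ = Multiplicative.ofAdd ((δW p) (jj + -i))
  rw [single, δW]
  by_cases h : jj = i
  · simp [h]
  · have : jj + -i ≠ 0 := fun hc => h (by linear_combination (norm := ring_nf) hc)
    simp [h, this]

lemma single_pow (i : ZMod p) (c : C p) :
    single p i c = (single p i (Multiplicative.ofAdd 1)) ^ (Multiplicative.toAdd c).val := by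
  funext jj
  simp only [single, Pi.pow_apply, ite_pow, one_pow]
  congr 1
  apply Multiplicative.toAdd.injective
  rw [toAdd_pow, toAdd_ofAdd, nsmul_eq_mul, mul_one, ZMod.natCast_rightInverse _]

lemma prod_single (f : V p) : f = ∏ i : ZMod p, single p i (f i) := by
  funext jj
  rw [Finset.prod_apply]
  have : ∀ i ∈ Finset.univ, single p i (f i) jj = if jj = i then f i else 1 := fun i _ => rfl
  rw [Finset.prod_congr rfl this]
  have : ∀ i ∈ Finset.univ, (if jj = i then f i else 1) = (if jj = i then f jj else 1) := by
    intro i _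
    by_cases h : jj = i <;> simp [h]
  rw [Finset.prod_congr rfl this, Finset.prod_ite_eq]
  simp

def S : Finset (G p) :=
  {SemidirectProduct.inr (φ := shiftHom p) (Multiplicative.ofAdd 1),
   SemidirectProduct.inl (δV p)}

lemma closure_S : Subgroup.closure ((S p : Set (G p))) = ⊤ := by
  rw [eq_top_iff]
  intro g _
  set H := Subgroup.closure ((S p : Set (G p))) with hH
  have hinr : SemidirectProduct.inr (φ := shiftHom p) (Multiplicative.ofAdd 1) ∈ H :=
    Subgroup.subset_closure (by simp [S])
  have hinl : SemidirectProduct.inl (φ := shiftHom p) (δV p) ∈ H :=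
    Subgroup.subset_closure (by simp [S])
  have hinrAll : ∀ k : C p, SemidirectProduct.inr (φ := shiftHom p) k ∈ H := by
    intro k
    have hk : k = (Multiplicative.ofAdd (1:ZMod p)) ^ (Multiplicative.toAdd k).val := by
      apply Multiplicative.toAdd.injective
      rw [toAdd_pow, toAdd_ofAdd, nsmul_eq_mul, mul_one, ZMod.natCast_rightInverse _]
    rw [hk, map_pow]
    exact Subgroup.pow_mem H hinr _
  have hinlAll : ∀ f : V p, SemidirectProduct.inl (φ := shiftHom p) f ∈ H := by
    intro f
    have hf : f ∈ H.comap (SemidirectProduct.inl : V p →* G p) := by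
      rw [prod_single p f]
      apply Subgroup.prod_mem
      intro i _
      rw [Subgroup.mem_comap]
      rw [single_pow, map_pow]
      apply Subgroup.pow_mem
      rw [single_eq_shift, SemidirectProduct.inl_aut]
      exact Subgroup.mul_mem _ (Subgroup.mul_mem _ (hinrAll _) hinl) (hinrAll _)
    exact Subgroup.mem_comap.1 hf
  rw [← SemidirectProduct.inl_left_mul_inr_right g]
  exact Subgroup.mul_mem _ (hinlAll _) (hinrAll _)

lemma lcm_S : (S p).lcm orderOf = p := by
  rw [S, Finset.lcm_insert, Finset.lcm_singleton, order_inr_x, order_inl_delta]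
  simp [Nat.lcm_self]

lemma genExp_eq : genExp (G p) = p := by
  have hmem : p ∈ {n | ∃ S : Finset (G p), Subgroup.closure (S : Set (G p)) = ⊤ ∧ n = S.lcm orderOf} :=
    ⟨S p, closure_S p, (lcm_S p).symm⟩
  have hlow : ∀ n ∈ {n | ∃ S : Finset (G p), Subgroup.closure (S : Set (G p)) = ⊤ ∧ n = S.lcm orderOf},
      p ≤ n := by
    rintro n ⟨S', hcl, rfl⟩
    have hex : ∃ s ∈ S', s ≠ (1 : G p) := by
      by_contra hc
      push_neg at hc
      have hsub : (S' : Set (G p)) ⊆ {1} := fun s hs => hc s hs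
      have : (⊤ : Subgroup (G p)) ≤ ⊥ := by
        rw [← hcl, ← Subgroup.closure_singleton_one]
        exact Subgroup.closure_mono hsub
      have hx := this (Subgroup.mem_top (SemidirectProduct.inr (φ := shiftHom p) (Multiplicative.ofAdd 1)))
      rw [Subgroup.mem_bot] at hx
      have := congrArg SemidirectProduct.right hx
      rw [SemidirectProduct.right_inr, SemidirectProduct.one_right] at this
      exact x_ne_one p this
    obtain ⟨s, hs, hs1⟩ := hex
    have hdvd : orderOf s ∣ p ^ 2 := orderOf_dvd_of_pow_eq_one (pow_p_sq p s)
    have hpord : p ∣ orderOf s := by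
      obtain ⟨k, hk2, hkeq⟩ := (Nat.dvd_prime_pow (Fact.out : p.Prime)).1 hdvd
      rcases Nat.eq_zero_or_pos k with h0 | hkpos
      · exfalso
        rw [h0, pow_zero] at hkeq
        exact hs1 (orderOf_eq_one_iff.1 hkeq)
      · rw [hkeq]
        exact dvd_pow_self p hkpos.ne'
    have : p ∣ S'.lcm orderOf := hpord.trans (Finset.dvd_lcm hs)
    refine Nat.le_of_dvd ?_ this
    have hlcm_dvd : S'.lcm orderOf ∣ p ^ 2 :=
      Finset.lcm_dvd fun b hb => orderOf_dvd_of_pow_eq_one (pow_p_sq p b)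
    rcases Nat.eq_zero_or_pos (S'.lcm orderOf) with h0 | hpos
    · rw [h0] at hlcm_dvd
      exact absurd (Nat.eq_zero_of_zero_dvd hlcm_dvd)
        (pow_ne_zero 2 (Fact.out : p.Prime).pos.ne')
    · exact hpos
  rw [genExp]
  apply le_antisymm (Nat.sInf_le hmem)
  have := Nat.sInf_mem ⟨p, hmem⟩
  exact hlow _ this

end WreathAux

/-- The wreath product `C_p ≀ C_p = (C_p)^p ⋊ C_p` (with `C_p` cyclically permuting the
coordinates) has exponent `p²`, generator exponent `p`, and nilpotency class exactly `p`
(i.e. `G_{p+1} = 1` but `G_p ≠ 1` in the lower central series,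
`G_d = lowerCentralSeries G (d-1)`). -/
theorem wreath_Cp_Cp_exponent_genExp_class (p : ℕ) [Fact p.Prime] :
    Monoid.exponent
        ((ZMod p → Multiplicative (ZMod p)) ⋊[shiftHom p] Multiplicative (ZMod p)) = p ^ 2 ∧
      genExp ((ZMod p → Multiplicative (ZMod p)) ⋊[shiftHom p] Multiplicative (ZMod p)) = p ∧
      Subgroup.lowerCentralSeries
          (⊤ : Subgroup ((ZMod p → Multiplicative (ZMod p)) ⋊[shiftHom p] Multiplicative (ZMod p))) p = ⊥ ∧
      Subgroup.lowerCentralSeries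
          (⊤ : Subgroup ((ZMod p → Multiplicative (ZMod p)) ⋊[shiftHom p] Multiplicative (ZMod p))) (p - 1)
        ≠ ⊥ := by
  exact ⟨WreathAux.exponent_eq p, WreathAux.genExp_eq p, WreathAux.lcs_p_eq_bot p,
    WreathAux.lcs_pred_ne_bot p⟩
end

section
/- The dihedral group D of order 16 is generated by two elements of order 2 (so ge(D) = 2), yet it has no normal subgroup N of exponent 2 together with a proper subgroup U of exponent dividing 2 with NU = D. -/
open Pointwise

open DihedralGroup in
lemma closure_sr01 : Subgroup.closure {(sr 0 : DihedralGroup 8), sr 1} = ⊤ := by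
  rw [eq_top_iff]
  intro x _
  have ha : (sr 0 : DihedralGroup 8) ∈ Subgroup.closure {(sr 0 : DihedralGroup 8), sr 1} :=
    Subgroup.subset_closure (by simp)
  have hb : (sr 1 : DihedralGroup 8) ∈ Subgroup.closure {(sr 0 : DihedralGroup 8), sr 1} :=
    Subgroup.subset_closure (by simp)
  have hr1 : (r 1 : DihedralGroup 8) ∈ Subgroup.closure {(sr 0 : DihedralGroup 8), sr 1} := by
    have := mul_mem ha hb
    rwa [sr_mul_sr, show (1 : ZMod 8) - 0 = 1 by decide] at this
  have hr : ∀ j : ZMod 8, (r j : DihedralGroup 8) ∈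
      Subgroup.closure {(sr 0 : DihedralGroup 8), sr 1} := by
    intro j
    have := pow_mem hr1 j.val
    rwa [r_one_pow, ZMod.natCast_val, ZMod.cast_id] at this
  cases x with
  | r j => exact hr j
  | sr j =>
      have := mul_mem ha (hr j)
      rwa [sr_mul_r, zero_add] at this

open DihedralGroup in
lemma genExp_aux :
    ({(sr 0 : DihedralGroup 8), sr 1} : Finset (DihedralGroup 8)).lcm orderOf = 2 := by
  rw [show ({(sr 0 : DihedralGroup 8), sr 1} : Finset (DihedralGroup 8)) =
      insert (sr 0) {sr 1} from rfl]
  rw [Finset.lcm_insert, Finset.lcm_singleton, orderOf_sr, orderOf_sr]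
  decide

open DihedralGroup in
lemma lcm_lower (S : Finset (DihedralGroup 8))
    (hS : Subgroup.closure (S : Set (DihedralGroup 8)) = ⊤) :
    2 ≤ S.lcm orderOf := by
  by_contra h
  push_neg at h
  interval_cases hn : S.lcm orderOf
  · have := Finset.lcm_eq_zero_iff.mp hn
    obtain ⟨x, -, hx⟩ := this
    exact (orderOf_pos x).ne' hx
  · have hone : ∀ s ∈ S, s = (1 : DihedralGroup 8) := by
      intro s hs
      have : orderOf s ∣ 1 := hn ▸ Finset.dvd_lcm hs
      exact orderOf_eq_one_iff.mp (Nat.dvd_one.mp this)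
    have hle : Subgroup.closure (S : Set (DihedralGroup 8)) ≤ ⊥ := by
      rw [Subgroup.closure_le]
      intro s hs
      simp [hone s hs]
    rw [hS] at hle
    have : (r 1 : DihedralGroup 8) = 1 := hle (Subgroup.mem_top _)
    rw [one_def] at this
    exact absurd (r.inj this) (by decide)

open DihedralGroup in
lemma no_decomp : ¬∃ (N U : Subgroup (DihedralGroup 8)), N.Normal ∧ Monoid.exponent N = 2 ∧
    U ≠ ⊤ ∧ Monoid.exponent U ∣ 2 ∧
    (N : Set (DihedralGroup 8)) * (U : Set (DihedralGroup 8)) = Set.univ := by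
  rintro ⟨N, U, hN, hexpN, -, hexpU, hNU⟩
  have hN2 : ∀ x ∈ N, x ^ 2 = 1 := by
    intro x hx
    have : (⟨x, hx⟩ : N) ^ 2 = 1 := by
      rw [← hexpN]; exact Monoid.pow_exponent_eq_one _
    simpa using congrArg Subtype.val this
  have hU2 : ∀ x ∈ U, x ^ 2 = 1 := by
    intro x hx
    have : (⟨x, hx⟩ : U) ^ 2 = 1 := by
      obtain ⟨c, hc⟩ := hexpU
      calc (⟨x, hx⟩ : U) ^ 2 = ((⟨x, hx⟩ : U) ^ Monoid.exponent U) ^ c := by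
              rw [← pow_mul, ← hc]
        _ = 1 := by rw [Monoid.pow_exponent_eq_one]; exact one_pow c
    simpa using congrArg Subtype.val this
  have hNr : ∀ i : ZMod 8, sr i ∉ N := by
    intro i hi
    have hinv : (r 1 : DihedralGroup 8)⁻¹ = r (-1) :=
      inv_eq_iff_mul_eq_one.mpr (by rw [r_mul_r, add_neg_cancel, one_def])
    have hc : r 1 * sr i * (r 1)⁻¹ ∈ N := hN.conj_mem _ hi (r 1)
    rw [hinv, r_mul_sr, sr_mul_r] at hc
    have hprod : sr i * sr (i - 1 + -1) ∈ N := mul_mem hi hc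
    rw [sr_mul_sr] at hprod
    have h2 := hN2 _ hprod
    rw [pow_two, r_mul_r, one_def] at h2
    have h4 := r.inj h2
    have : (4 : ZMod 8) = 0 := by linear_combination -h4
    exact absurd this (by decide)
  have hmem : (r 1 : DihedralGroup 8) ∈
      (N : Set (DihedralGroup 8)) * (U : Set (DihedralGroup 8)) := by
    rw [hNU]; trivial
  obtain ⟨n, hn, u, hu, hmul⟩ := hmem
  cases n with
  | sr i => exact hNr i hn
  | r j =>
    have hj : j + j = 0 := by
      have h2 := hN2 _ hn
      rw [pow_two, r_mul_r, one_def] at h2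
      exact r.inj h2
    have hjinv : (r j : DihedralGroup 8)⁻¹ = r (-j) :=
      inv_eq_iff_mul_eq_one.mpr (by rw [r_mul_r, add_neg_cancel, one_def])
    have hu' : u = r (-j + 1) := by
      have hmul' : r j * u = r 1 := hmul
      have h := eq_inv_mul_iff_mul_eq.mpr hmul'
      rwa [hjinv, r_mul_r] at h
    have h2 := hU2 u hu
    rw [hu', pow_two, r_mul_r, one_def] at h2
    have h2' := r.inj h2
    have : (2 : ZMod 8) = 0 := by linear_combination h2' + hj
    exact absurd this (by decide)

/-- The dihedral group `D` of order 16 is generated by two elements of order 2 (so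
`ge(D) = 2`), yet it has no normal subgroup `N` of exponent 2 together with a proper subgroup
`U` of exponent dividing 2 with `NU = D`. -/
theorem dihedral16_no_exponent_two_decomposition :
    (∃ a b : DihedralGroup 8, orderOf a = 2 ∧ orderOf b = 2 ∧
        Subgroup.closure {a, b} = (⊤ : Subgroup (DihedralGroup 8))) ∧
      genExp (DihedralGroup 8) = 2 ∧
      ¬∃ (N U : Subgroup (DihedralGroup 8)), N.Normal ∧ Monoid.exponent N = 2 ∧ U ≠ ⊤ ∧
        Monoid.exponent U ∣ 2 ∧ (N : Set (DihedralGroup 8)) * (U : Set (DihedralGroup 8)) =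
          Set.univ := by
  refine ⟨⟨DihedralGroup.sr 0, DihedralGroup.sr 1, DihedralGroup.orderOf_sr _,
      DihedralGroup.orderOf_sr _, closure_sr01⟩, ?_, no_decomp⟩
  have hmem : 2 ∈ {n | ∃ S : Finset (DihedralGroup 8),
      Subgroup.closure (S : Set (DihedralGroup 8)) = ⊤ ∧ n = S.lcm orderOf} := by
    refine ⟨{DihedralGroup.sr 0, DihedralGroup.sr 1}, ?_, genExp_aux.symm⟩
    rw [Finset.coe_insert, Finset.coe_singleton]
    exact closure_sr01
  exact le_antisymm (Nat.sInf_le hmem)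
    (le_csInf ⟨2, hmem⟩ (by rintro n ⟨S, hS, rfl⟩; exact lcm_lower S hS))
end
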